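/- arXiv:math/0612121 — 7 statements merged into one kernel-verified Lean document; each statement's English description precedes it below -/
import Mathlib

section
/- For γ > 0 and every positive integer n, e^{-γ√n} = (γ/(2√π)) ∫_0^∞ p^{-3/2} e^{-γ²/(4p)} e^{-np} dp. -/
/-!
Substituting `p = (γ / (2u))²` turns the integral into `(4/γ) ∫₀^∞ exp (-u² - c²/u²) du` with
`c = γ√x/2`. For this integral `I`, the substitution `u ↦ c/u` gives `I = ∫₀^∞ (c/u²) exp (…) du`,
so `2I = e^{-2c} ∫₀^∞ (1 + c/u²) exp (-(u - c/u)²) du`; and `v = u - c/u` maps `(0, ∞)` onto `ℝ`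
with `dv = (1 + c/u²) du`, which leaves the Gaussian integral `√π`.
-/

open MeasureTheory Set Real

theorem hasDerivAt_const_div (c : ℝ) {u : ℝ} (hu : u ≠ 0) :
    HasDerivAt (fun u ↦ c / u) (-(c / u ^ 2)) u := by
  simpa [div_eq_mul_inv, neg_div] using (hasDerivAt_inv hu).const_mul c

section ChangeOfVariables

variable {E : Type*} [NormedAddCommGroup E] [NormedSpace ℝ E] {c : ℝ}

theorem integral_comp_sq_Ioi (g : ℝ → E) :
    ∫ t in Ioi 0, (2 * t) • g (t ^ 2) = ∫ p in Ioi 0, g p := by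
  have := integral_comp_rpow_Ioi_of_pos (g := g) two_pos
  norm_num at this
  exact this

theorem injOn_const_div_Ioi (hc : 0 < c) : InjOn (fun u ↦ c / u) (Ioi 0) :=
  fun _ _ _ _ h ↦ by
    simp only [div_eq_mul_inv] at h
    exact inv_injective (mul_left_cancel₀ hc.ne' h)

theorem image_const_div_Ioi_zero (hc : 0 < c) : (fun u ↦ c / u) '' Ioi 0 = Ioi 0 := by
  refine Subset.antisymm (image_subset_iff.2 fun u hu ↦ div_pos hc hu) fun y hy ↦ ?_
  exact ⟨c / y, div_pos hc hy, div_div_cancel₀ hc.ne'⟩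

theorem integral_comp_const_div_Ioi (g : ℝ → E) (hc : 0 < c) :
    ∫ u in Ioi 0, (c / u ^ 2) • g (c / u) = ∫ p in Ioi 0, g p := by
  have := integral_image_eq_integral_abs_deriv_smul measurableSet_Ioi
    (fun u hu ↦ (hasDerivAt_const_div c (ne_of_gt hu)).hasDerivWithinAt)
    (injOn_const_div_Ioi hc) g
  rw [image_const_div_Ioi_zero hc] at this
  rw [this]
  refine setIntegral_congr_fun measurableSet_Ioi fun u hu ↦ ?_
  rw [abs_neg, abs_of_pos (div_pos hc (pow_pos hu 2))]

theorem integrableOn_comp_const_div_Ioi_iff (g : ℝ → E) (hc : 0 < c) :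
    IntegrableOn (fun u ↦ (c / u ^ 2) • g (c / u)) (Ioi 0) ↔ IntegrableOn g (Ioi 0) := by
  have := integrableOn_image_iff_integrableOn_abs_deriv_smul measurableSet_Ioi
    (fun u hu ↦ (hasDerivAt_const_div c (ne_of_gt hu)).hasDerivWithinAt)
    (injOn_const_div_Ioi hc) g
  rw [image_const_div_Ioi_zero hc] at this
  rw [this]
  refine integrableOn_congr_fun (fun u hu ↦ ?_) measurableSet_Ioi
  rw [abs_neg, abs_of_pos (div_pos hc (pow_pos hu 2))]

end ChangeOfVariables

theorem hasDerivAt_sub_const_div (c : ℝ) {u : ℝ} (hu : u ≠ 0) :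
    HasDerivAt (fun u ↦ u - c / u) (1 + c / u ^ 2) u :=
  ((hasDerivAt_id' u).sub (hasDerivAt_const_div c hu)).congr_deriv (sub_neg_eq_add _ _)

theorem strictMonoOn_sub_const_div_Ioi {c : ℝ} (hc : 0 < c) :
    StrictMonoOn (fun u ↦ u - c / u) (Ioi 0) :=
  fun _ ha _ _ hab ↦ sub_lt_sub hab (div_lt_div_of_pos_left hc ha hab)

theorem image_sub_const_div_Ioi {c : ℝ} (hc : 0 < c) : (fun u ↦ u - c / u) '' Ioi 0 = univ := by
  refine eq_univ_of_forall fun v ↦ ?_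
  -- the positive root of `u ^ 2 - v * u - c = 0`
  set s := √(v ^ 2 + 4 * c)
  have hs : s ^ 2 = v ^ 2 + 4 * c := sq_sqrt (by positivity)
  have hvs : |v| < s := by
    rw [← sqrt_sq_eq_abs]
    exact sqrt_lt_sqrt (sq_nonneg v) (by linarith)
  have hu : 0 < v + s := by linarith [neg_abs_le v]
  refine ⟨(v + s) / 2, half_pos hu, ?_⟩
  field_simp
  nlinarith [hs]

theorem integral_one_add_div_sq_mul_exp_neg_sq_sub_div {c : ℝ} (hc : 0 < c) :
    ∫ u in Ioi 0, (1 + c / u ^ 2) * exp (-(u - c / u) ^ 2) = √π := by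
  have := integral_image_eq_integral_abs_deriv_smul measurableSet_Ioi
    (fun u hu ↦ (hasDerivAt_sub_const_div c (ne_of_gt hu)).hasDerivWithinAt)
    (strictMonoOn_sub_const_div_Ioi hc).injOn fun v ↦ exp (-v ^ 2)
  rw [image_sub_const_div_Ioi hc, setIntegral_univ] at this
  have hgauss : ∫ v, exp (-v ^ 2) = √π := by simpa using integral_gaussian 1
  rw [← hgauss, this]
  refine setIntegral_congr_fun measurableSet_Ioi fun u hu ↦ ?_
  rw [abs_of_pos (by positivity), smul_eq_mul]

theorem integrableOn_exp_neg_sq_sub_div_sq (c : ℝ) :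
    IntegrableOn (fun u ↦ exp (-u ^ 2 - c ^ 2 / u ^ 2)) (Ioi 0) := by
  refine (integrable_exp_neg_mul_sq one_pos).integrableOn.mono' (by fun_prop)
    (Filter.Eventually.of_forall fun u ↦ ?_)
  rw [norm_of_nonneg (exp_pos _).le, neg_one_mul, exp_le_exp]
  linarith [div_nonneg (sq_nonneg c) (sq_nonneg u)]

theorem integral_exp_neg_sq_sub_div_sq {c : ℝ} (hc : 0 ≤ c) :
    ∫ u in Ioi 0, exp (-u ^ 2 - c ^ 2 / u ^ 2) = √π / 2 * exp (-2 * c) := by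
  rcases hc.eq_or_lt with rfl | hc
  · simpa using integral_gaussian_Ioi 1
  set φ := fun u : ℝ ↦ exp (-u ^ 2 - c ^ 2 / u ^ 2)
  have hφ : EqOn (fun u ↦ (c / u ^ 2) • φ (c / u)) (fun u ↦ c / u ^ 2 * φ u) (Ioi 0) := by
    intro u hu
    have hu : u ≠ 0 := (mem_Ioi.1 hu).ne'
    have : -(c / u) ^ 2 - c ^ 2 / (c / u) ^ 2 = -u ^ 2 - c ^ 2 / u ^ 2 := by
      field_simp
      ring
    simp only [φ, smul_eq_mul, this]
  have hint : IntegrableOn (fun u ↦ c / u ^ 2 * φ u) (Ioi 0) :=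
    ((integrableOn_comp_const_div_Ioi_iff φ hc).2
      (integrableOn_exp_neg_sq_sub_div_sq c)).congr_fun hφ measurableSet_Ioi
  have hsym : ∫ u in Ioi 0, c / u ^ 2 * φ u = ∫ u in Ioi 0, φ u :=
    (setIntegral_congr_fun measurableSet_Ioi hφ).symm.trans (integral_comp_const_div_Ioi φ hc)
  have hsq : EqOn (fun u ↦ φ u + c / u ^ 2 * φ u)
      (fun u ↦ exp (-2 * c) * ((1 + c / u ^ 2) * exp (-(u - c / u) ^ 2))) (Ioi 0) := by
    intro u hu
    have hu : u ≠ 0 := (mem_Ioi.1 hu).ne'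
    have : -u ^ 2 - c ^ 2 / u ^ 2 = -(u - c / u) ^ 2 + -2 * c := by
      field_simp
      ring
    simp only [φ, this, exp_add]
    ring
  have := integral_add (integrableOn_exp_neg_sq_sub_div_sq c) hint
  rw [hsym, setIntegral_congr_fun measurableSet_Ioi hsq, integral_const_mul,
    integral_one_add_div_sq_mul_exp_neg_sq_sub_div hc] at this
  linarith

theorem sq_rpow_neg_three_halves {r : ℝ} (hr : 0 ≤ r) : (r ^ 2) ^ (-(3 : ℝ) / 2) = (r ^ 3)⁻¹ := by
  rw [← rpow_natCast r 2, ← rpow_mul hr]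
  norm_num

theorem integral_rpow_neg_three_halves_mul_exp_mul_exp {γ x : ℝ} (hγ : 0 < γ) (hx : 0 ≤ x) :
    ∫ p in Ioi 0, p ^ (-(3 : ℝ) / 2) * exp (-γ ^ 2 / (4 * p)) * exp (-x * p) =
      2 * √π / γ * exp (-γ * √x) := by
  set G := fun p : ℝ ↦ p ^ (-(3 : ℝ) / 2) * exp (-γ ^ 2 / (4 * p)) * exp (-x * p)
  have hG : EqOn (fun u ↦ (γ / 2 / u ^ 2) • ((2 * (γ / 2 / u)) • G ((γ / 2 / u) ^ 2)))
      (fun u ↦ 4 / γ * exp (-u ^ 2 - (γ * √x / 2) ^ 2 / u ^ 2)) (Ioi 0) := by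
    intro u hu
    have hu : 0 < u := hu
    have h1 : -γ ^ 2 / (4 * (γ / 2 / u) ^ 2) = -u ^ 2 := by
      field_simp
      ring
    have h2 : -x * (γ / 2 / u) ^ 2 = -((γ * √x / 2) ^ 2 / u ^ 2) := by
      linear_combination γ ^ 2 / (4 * u ^ 2) * sq_sqrt hx
    simp only [G, smul_eq_mul, sq_rpow_neg_three_halves (by positivity : 0 ≤ γ / 2 / u), h1, h2,
      sub_eq_add_neg, exp_add]
    field_simp
    ring
  calc ∫ p in Ioi 0, G p
      = ∫ u in Ioi 0, (γ / 2 / u ^ 2) • ((2 * (γ / 2 / u)) • G ((γ / 2 / u) ^ 2)) :=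
        (integral_comp_sq_Ioi G).symm.trans
          (integral_comp_const_div_Ioi (fun t ↦ (2 * t) • G (t ^ 2)) (half_pos hγ)).symm
    _ = ∫ u in Ioi 0, 4 / γ * exp (-u ^ 2 - (γ * √x / 2) ^ 2 / u ^ 2) :=
        setIntegral_congr_fun measurableSet_Ioi hG
    _ = 2 * √π / γ * exp (-γ * √x) := by
        rw [integral_const_mul, integral_exp_neg_sq_sub_div_sq (by positivity)]
        field_simp
        norm_num

theorem stmt2_general (γ : ℝ) (hγ : 0 < γ) (n : ℕ) :
    Real.exp (-γ * Real.sqrt n) =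
      γ / (2 * Real.sqrt Real.pi) *
        ∫ p in Ioi (0 : ℝ),
          p ^ (-(3 : ℝ) / 2) * Real.exp (-γ ^ 2 / (4 * p)) * Real.exp (-(n : ℝ) * p) := by
  rw [integral_rpow_neg_three_halves_mul_exp_mul_exp hγ n.cast_nonneg]
  field_simp

/-- For `γ > 0` and each positive integer `n`,
`e^{-γ√n} = (γ/(2√π)) ∫_0^∞ p^{-3/2} e^{-γ²/(4p)} e^{-np} dp`. -/
theorem stmt2 (γ : ℝ) (hγ : 0 < γ) (n : ℕ) (hn : 0 < n) :
    Real.exp (-γ * Real.sqrt n) =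
      γ / (2 * Real.sqrt Real.pi) *
        ∫ p in Ioi (0 : ℝ),
          p ^ (-(3 : ℝ) / 2) * Real.exp (-γ ^ 2 / (4 * p)) * Real.exp (-(n : ℝ) * p) :=
  stmt2_general γ hγ n
end

section
/- Let F : ℝ_{>0} → ℂ be continuous and bounded on (0,∞) with ∫_0^∞ |F(p)| dp < ∞, let a ∈ ℂ with a ≠ 0, and define f_k = a^{-k} ∫_0^∞ e^{-kp} F(p) dp for k ≥ 1. Then for all z ∈ ℂ with |z| < |a| and z·a ∉ ℝ_{≥0}·a² (i.e., z/a not on [0,∞)), Σ_{n=1}^∞ f_n z^n = z ∫_0^∞ F(ln(1+s)) / ((1+s)(s·a + a − z)) ds. -/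
/-!
For `p > 0` the ratio `q p = (z / a) e^{-p}` has modulus at most `‖z / a‖ < 1`, and
`a^{-n} e^{-np} z^n = q p ^ n`. The series is therefore dominated by `Σ ‖z / a‖^n ‖F‖`, so it
may be summed under the integral, giving `∫ F q / (1 - q) = z ∫ F p / (a e^p - z) dp`; the
substitution `s = e^p - 1` turns this into the right-hand side.
-/

open MeasureTheory Set

theorem integral_comp_exp_sub_one_Ioi {E : Type*} [NormedAddCommGroup E] [NormedSpace ℝ E]
    (g : ℝ → E) :
    ∫ p in Ioi 0, Real.exp p • g (Real.exp p - 1) = ∫ s in Ioi 0, g s := by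
  have himage : (fun p => Real.exp p - 1) '' Ioi 0 = Ioi 0 := by
    rw [← image_image (· - 1) Real.exp, Real.image_exp_Ioi, Real.exp_zero, image_sub_const_Ioi,
      sub_self]
  conv_rhs => rw [← himage]
  rw [integral_image_eq_integral_abs_deriv_smul measurableSet_Ioi
      (fun p _ => ((Real.hasDerivAt_exp p).sub_const 1).hasDerivWithinAt)
      (fun p _ q _ h => Real.exp_injective (sub_left_injective h))]
  simp_rw [Real.abs_exp]

theorem tsum_integral_mul_pow_succ {α : Type*} [MeasurableSpace α] {μ : Measure α}
    {F q : α → ℂ} (hF : Integrable F μ) (hq : AEStronglyMeasurable q μ) {r : NNReal}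
    (hr : r < 1) (hqr : ∀ᵐ x ∂μ, ‖q x‖ ≤ r) :
    ∑' n : ℕ, ∫ x, F x * q x ^ (n + 1) ∂μ = ∫ x, F x * q x / (1 - q x) ∂μ := by
  have hbound : ∀ n : ℕ, ∀ᵐ x ∂μ, ‖F x * q x ^ (n + 1)‖ ≤ r ^ (n + 1) * ‖F x‖ := by
    intro n
    filter_upwards [hqr] with x hx
    rw [norm_mul, norm_pow, mul_comm]
    gcongr
  have hint : ∀ n : ℕ, Integrable (fun x => F x * q x ^ (n + 1)) μ := fun n =>
    (hF.norm.const_mul _).mono' (hF.aestronglyMeasurable.mul (hq.pow _)) (hbound n)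
  have hsum : Summable fun n : ℕ => ∫ x, ‖F x * q x ^ (n + 1)‖ ∂μ := by
    have hgeom := (summable_nat_add_iff 1).mpr (summable_geometric_of_lt_one r.2 hr)
    refine Summable.of_nonneg_of_le (fun n => integral_nonneg fun x => norm_nonneg _)
      (fun n => ?_) (hgeom.mul_right (∫ x, ‖F x‖ ∂μ))
    rw [← integral_const_mul]
    exact integral_mono_ae (hint n).norm (hF.norm.const_mul _) (hbound n)
  rw [integral_tsum_of_summable_integral_norm hint hsum]
  refine integral_congr_ae ?_
  filter_upwards [hqr] with x hx
  simp_rw [pow_succ', ← mul_assoc]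
  rw [tsum_mul_left, tsum_geometric_of_norm_lt_one (hx.trans_lt hr), div_eq_mul_inv]

theorem zpow_neg_mul_integral_mul_pow_eq (F : ℝ → ℂ) (a z : ℂ) (n : ℕ) :
    (a ^ (-(n + 1 : ℤ)) * ∫ p in Ioi (0 : ℝ), Complex.exp (-((n : ℂ) + 1) * p) * F p) *
        z ^ (n + 1) =
      ∫ p in Ioi (0 : ℝ), F p * (z / a * Complex.exp (-p)) ^ (n + 1) := by
  rw [← integral_const_mul, ← integral_mul_const]
  refine setIntegral_congr_fun measurableSet_Ioi fun p _ => ?_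
  have hexp : Complex.exp (-((n : ℂ) + 1) * p) = Complex.exp (-p) ^ (n + 1) := by
    rw [← Complex.exp_nat_mul]; push_cast; ring_nf
  rw [hexp, zpow_neg, show ((n : ℤ) + 1) = ((n + 1 : ℕ) : ℤ) by push_cast; ring, zpow_natCast]
  ring

theorem exp_mul_sub_ne_zero {a z : ℂ} (hz : ‖z‖ < ‖a‖) {p : ℝ} (hp : 0 ≤ p) :
    Complex.exp p * a - z ≠ 0 := by
  refine sub_ne_zero.mpr fun h => hz.not_ge ?_
  rw [← h, norm_mul, ← Complex.ofReal_exp, Complex.norm_real,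
    Real.norm_of_nonneg (Real.exp_nonneg p)]
  exact le_mul_of_one_le_left (norm_nonneg a) (Real.one_le_exp hp)

theorem stmt3_general (F : ℝ → ℂ)
    (hFint : IntegrableOn F (Ioi 0))
    (a : ℂ) (z : ℂ) (hz : ‖z‖ < ‖a‖) :
    ∑' n : ℕ,
        (a ^ (-(n + 1 : ℤ)) * ∫ p in Ioi (0 : ℝ), Complex.exp (-((n : ℂ) + 1) * p) * F p) *
          z ^ (n + 1) =
      z * ∫ s in Ioi (0 : ℝ),
        F (Real.log (1 + s)) / ((1 + (s : ℂ)) * ((s : ℂ) * a + a - z)) := by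
  have ha : a ≠ 0 := norm_pos_iff.mp ((norm_nonneg z).trans_lt hz)
  have hr : ‖z / a‖₊ < 1 := by
    rw [← NNReal.coe_lt_coe, coe_nnnorm, NNReal.coe_one, norm_div,
      div_lt_one (norm_pos_iff.mpr ha)]
    exact hz
  have hq : ∀ᵐ p : ℝ ∂volume.restrict (Ioi 0), ‖z / a * Complex.exp (-p)‖ ≤ ‖z / a‖₊ := by
    filter_upwards [ae_restrict_mem measurableSet_Ioi] with p hp
    rw [coe_nnnorm, norm_mul, ← Complex.ofReal_neg, ← Complex.ofReal_exp, Complex.norm_real,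
      Real.norm_of_nonneg (Real.exp_nonneg _)]
    exact mul_le_of_le_one_right (norm_nonneg _)
      (Real.exp_le_one_iff.mpr (neg_nonpos.mpr hp.out.le))
  rw [tsum_congr (zpow_neg_mul_integral_mul_pow_eq F a z),
    tsum_integral_mul_pow_succ hFint (by fun_prop) hr hq]
  conv_rhs => rw [← integral_comp_exp_sub_one_Ioi, ← integral_const_mul]
  refine setIntegral_congr_fun measurableSet_Ioi fun p hp => ?_
  have hE : Complex.exp p * a - z ≠ 0 := exp_mul_sub_ne_zero hz (le_of_lt hp)
  simp only [add_sub_cancel, Real.log_exp, Complex.real_smul, Complex.ofReal_sub,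
    Complex.ofReal_exp, Complex.ofReal_one, Complex.exp_neg]
  field_simp
  ring

/-- Core reconstruction identity (single singularity): if
`f_k = a^{-k} ∫_0^∞ e^{-kp} F(p) dp` with `F` continuous, bounded and integrable on `(0,∞)`,
then for `|z| < |a|` with `z/a ∉ [0,∞)`,
`Σ_{n≥1} f_n z^n = z ∫_0^∞ F(ln(1+s)) / ((1+s)(s a + a - z)) ds`. -/
theorem stmt3 (F : ℝ → ℂ) (hFc : ContinuousOn F (Ioi 0))
    (hFbd : ∃ C : ℝ, ∀ p ∈ Ioi (0 : ℝ), ‖F p‖ ≤ C)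
    (hFint : IntegrableOn F (Ioi 0))
    (a : ℂ) (ha : a ≠ 0) (z : ℂ) (hz : ‖z‖ < ‖a‖)
    (hray : ∀ t : ℝ, 0 ≤ t → z ≠ (t : ℂ) * a) :
    ∑' n : ℕ,
        (a ^ (-(n + 1 : ℤ)) * ∫ p in Ioi (0 : ℝ), Complex.exp (-((n : ℂ) + 1) * p) * F p) *
          z ^ (n + 1) =
      z * ∫ s in Ioi (0 : ℝ),
        F (Real.log (1 + s)) / ((1 + (s : ℂ)) * ((s : ℂ) * a + a - z)) :=
  stmt3_general F hFint a z hz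
end

section
/- For every positive integer n, n! = n^{n+1} e^{-n} ∫_0^∞ e^{-np} G(p) dp, where G(p) = s₂'(1+p) − s₁'(1+p) and s₁ : (1,∞) → (0,1), s₂ : (1,∞) → (1,∞) are the two inverse branches of the map s ↦ s − ln s. -/
open MeasureTheory Set Filter Topology

/-!
Substituting `t = n s` in `n! = ∫₀^∞ tⁿ e⁻ᵗ dt` gives `n! = n^(n+1) ∫₀^∞ e^(-n φ(s)) ds` with
`φ(s) = s - log s`. Split the integral at the minimum `s = 1` of `φ`: on `(0, 1)` and on `(1, ∞)`
the map `φ` is a diffeomorphism onto `(1, ∞)` with inverse `s₁`, resp. `s₂`, so the substitution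
`s = sᵢ(1 + p)` turns the two pieces into `e⁻ⁿ ∫₀^∞ e^(-n p) |sᵢ'(1 + p)| dp`, and
`s₁' < 0 < s₂'`.
-/

theorem StrictAntiOn.continuousAt_of_image_mem_nhds {α β : Type*} [LinearOrder α]
    [TopologicalSpace α] [OrderTopology α] [LinearOrder β] [TopologicalSpace β] [OrderTopology β]
    [DenselyOrdered β] {f : α → β} {s : Set α} {a : α} (hf : StrictAntiOn f s) (hs : s ∈ 𝓝 a)
    (hfs : f '' s ∈ 𝓝 (f a)) : ContinuousAt f a :=
  hf.dual_right.continuousAt_of_image_mem_nhds hs hfs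

noncomputable def phi (x : ℝ) : ℝ := x - Real.log x

lemma hasDerivAt_phi {x : ℝ} (hx : x ≠ 0) : HasDerivAt phi (1 - x⁻¹) x :=
  (hasDerivAt_id x).sub (Real.hasDerivAt_log hx)

lemma continuousOn_phi : ContinuousOn phi (Ioi 0) := fun _ hx =>
  (hasDerivAt_phi (ne_of_gt hx)).continuousAt.continuousWithinAt

lemma strictMonoOn_phi : StrictMonoOn phi (Ioi 1) := by
  refine strictMonoOn_of_deriv_pos (convex_Ioi 1)
    (continuousOn_phi.mono (Ioi_subset_Ioi zero_le_one)) fun x hx => ?_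
  rw [interior_Ioi] at hx
  rw [(hasDerivAt_phi (zero_lt_one.trans hx).ne').deriv, sub_pos]
  exact inv_lt_one_of_one_lt₀ hx

lemma strictAntiOn_phi : StrictAntiOn phi (Ioo 0 1) := by
  refine strictAntiOn_of_deriv_neg (convex_Ioo 0 1)
    (continuousOn_phi.mono Ioo_subset_Ioi_self) fun x hx => ?_
  rw [interior_Ioo] at hx
  rw [(hasDerivAt_phi hx.1.ne').deriv, sub_neg]
  exact (one_lt_inv₀ hx.1).2 hx.2

lemma one_lt_phi {x : ℝ} (hx : 0 < x) (hx1 : x ≠ 1) : 1 < phi x := by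
  have := Real.log_lt_sub_one_of_pos hx hx1
  unfold phi
  linarith

lemma exp_neg_mul_phi (a : ℝ) {x : ℝ} (hx : 0 < x) :
    Real.exp (-a * phi x) = x ^ a * Real.exp (-(a * x)) := by
  rw [Real.rpow_def_of_pos hx, ← Real.exp_add, phi]
  ring_nf

lemma integrableOn_exp_neg_mul_phi {a : ℝ} (ha : 0 < a) :
    IntegrableOn (fun x => Real.exp (-a * phi x)) (Ioi 0) := by
  refine (integrableOn_rpow_mul_exp_neg_mul_rpow (by linarith) zero_lt_one ha).congr_fun
    (fun x hx => ?_) measurableSet_Ioi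
  rw [exp_neg_mul_phi a hx]
  simp only [Real.rpow_one, neg_mul]

lemma Gamma_add_one_eq_integral_exp_neg_mul_phi {a : ℝ} (ha : 0 < a) :
    Real.Gamma (a + 1) = a ^ (a + 1) * ∫ x in Ioi 0, Real.exp (-a * phi x) := by
  have h := Real.integral_rpow_mul_exp_neg_mul_Ioi (a := a + 1) (by linarith) ha
  rw [add_sub_cancel_right] at h
  rw [setIntegral_congr_fun measurableSet_Ioi fun x hx => exp_neg_mul_phi a hx, h,
    ← mul_assoc, ← Real.mul_rpow ha.le (by positivity), mul_one_div_cancel ha.ne', Real.one_rpow,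
    one_mul]

section ShiftByOne

variable {s : ℝ → ℝ} {S : Set ℝ}

lemma Set.BijOn.comp_one_add (hbij : BijOn s (Ioi 1) S) :
    BijOn (fun p => s (1 + p)) (Ioi 0) S := by
  have hshift : BijOn (fun p : ℝ => 1 + p) (Ioi 0) (Ioi 1) := by
    simpa using (add_right_injective (1 : ℝ)).injOn.bijOn_image (s := Ioi 0)
  exact hbij.comp hshift

lemma hasDerivWithinAt_comp_one_add (hd : ∀ t, 1 < t → DifferentiableAt ℝ s t) {p : ℝ}
    (hp : p ∈ Ioi 0) : HasDerivWithinAt (fun p => s (1 + p)) (deriv s (1 + p)) (Ioi 0) p :=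
  ((hd (1 + p) (by linarith [mem_Ioi.1 hp])).hasDerivAt.comp_const_add 1 p).hasDerivWithinAt

end ShiftByOne

def IsPhiBranch (s : ℝ → ℝ) (S : Set ℝ) : Prop :=
  ∀ t, 1 < t → s t ∈ S ∧ phi (s t) = t

namespace IsPhiBranch

variable {s : ℝ → ℝ} {S : Set ℝ} {t : ℝ}

lemma bijOn (h : IsPhiBranch s S) (hinj : InjOn phi S) (hmaps : MapsTo phi S (Ioi 1)) :
    BijOn s (Ioi 1) S := by
  refine ⟨fun t ht => (h t ht).1, fun a ha b hb hab => ?_, fun x hx => ?_⟩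
  · rw [← (h a ha).2, ← (h b hb).2, hab]
  · exact ⟨phi x, hmaps hx, hinj (h _ (hmaps hx)).1 hx (h _ (hmaps hx)).2⟩

lemma strictMonoOn (h : IsPhiBranch s S) (hφ : StrictMonoOn phi S) :
    StrictMonoOn s (Ioi 1) := fun a ha b hb hab =>
  (hφ.lt_iff_lt (h a ha).1 (h b hb).1).1 (by rwa [(h a ha).2, (h b hb).2])

lemma strictAntiOn (h : IsPhiBranch s S) (hφ : StrictAntiOn phi S) :
    StrictAntiOn s (Ioi 1) := fun a ha b hb hab =>
  (hφ.lt_iff_gt (h a ha).1 (h b hb).1).1 (by rwa [(h a ha).2, (h b hb).2])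

lemma hasDerivAt (h : IsPhiBranch s S) (ht : 1 < t) (hcont : ContinuousAt s t)
    (h0 : s t ≠ 0) (h1 : s t ≠ 1) : HasDerivAt s (1 - (s t)⁻¹)⁻¹ t :=
  (hasDerivAt_phi h0).of_local_left_inverse hcont (sub_ne_zero.2 (by simpa [eq_comm] using h1))
    (eventually_of_mem (Ioi_mem_nhds ht) fun y hy => (h y hy).2)

lemma bijOn_Ioi (h : IsPhiBranch s (Ioi 1)) : BijOn s (Ioi 1) (Ioi 1) :=
  h.bijOn strictMonoOn_phi.injOn fun _ hx => one_lt_phi (zero_lt_one.trans hx) hx.ne'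

lemma bijOn_Ioo (h : IsPhiBranch s (Ioo 0 1)) : BijOn s (Ioi 1) (Ioo 0 1) :=
  h.bijOn strictAntiOn_phi.injOn fun _ hx => one_lt_phi hx.1 hx.2.ne

lemma hasDerivAt_of_Ioi (h : IsPhiBranch s (Ioi 1)) (ht : 1 < t) :
    HasDerivAt s (1 - (s t)⁻¹)⁻¹ t := by
  have hst : 1 < s t := (h t ht).1
  refine h.hasDerivAt ht ?_ (zero_lt_one.trans hst).ne' hst.ne'
  refine (h.strictMonoOn strictMonoOn_phi).continuousAt_of_image_mem_nhds (Ioi_mem_nhds ht) ?_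
  rw [h.bijOn_Ioi.image_eq]
  exact Ioi_mem_nhds hst

lemma hasDerivAt_of_Ioo (h : IsPhiBranch s (Ioo 0 1)) (ht : 1 < t) :
    HasDerivAt s (1 - (s t)⁻¹)⁻¹ t := by
  have hst : s t ∈ Ioo 0 1 := (h t ht).1
  refine h.hasDerivAt ht ?_ hst.1.ne' hst.2.ne
  refine (h.strictAntiOn strictAntiOn_phi).continuousAt_of_image_mem_nhds (Ioi_mem_nhds ht) ?_
  rw [h.bijOn_Ioo.image_eq]
  exact Ioo_mem_nhds hst.1 hst.2

lemma deriv_pos_of_Ioi (h : IsPhiBranch s (Ioi 1)) (ht : 1 < t) : 0 < deriv s t := by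
  rw [(h.hasDerivAt_of_Ioi ht).deriv, inv_pos, sub_pos]
  exact inv_lt_one_of_one_lt₀ (h t ht).1

lemma deriv_neg_of_Ioo (h : IsPhiBranch s (Ioo 0 1)) (ht : 1 < t) : deriv s t < 0 := by
  have hst : s t ∈ Ioo 0 1 := (h t ht).1
  rw [(h.hasDerivAt_of_Ioo ht).deriv, inv_lt_zero, sub_neg]
  exact (one_lt_inv₀ hst.1).2 hst.2

lemma integrableOn_comp_phi_iff (h : IsPhiBranch s S) (hbij : BijOn s (Ioi 1) S)
    (hd : ∀ t, 1 < t → DifferentiableAt ℝ s t) (g : ℝ → ℝ) :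
    IntegrableOn (fun x => g (phi x)) S ↔
      IntegrableOn (fun p => |deriv s (1 + p)| * g (1 + p)) (Ioi 0) := by
  rw [← hbij.comp_one_add.image_eq, integrableOn_image_iff_integrableOn_abs_deriv_smul
    measurableSet_Ioi (fun _ => hasDerivWithinAt_comp_one_add hd) hbij.comp_one_add.injOn]
  refine integrableOn_congr_fun (fun p (hp : 0 < p) => ?_) measurableSet_Ioi
  rw [smul_eq_mul, (h (1 + p) (by linarith)).2]

lemma integral_comp_phi (h : IsPhiBranch s S) (hbij : BijOn s (Ioi 1) S)
    (hd : ∀ t, 1 < t → DifferentiableAt ℝ s t) (g : ℝ → ℝ) :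
    ∫ x in S, g (phi x) = ∫ p in Ioi 0, |deriv s (1 + p)| * g (1 + p) := by
  rw [← hbij.comp_one_add.image_eq, integral_image_eq_integral_abs_deriv_smul
    measurableSet_Ioi (fun _ => hasDerivWithinAt_comp_one_add hd) hbij.comp_one_add.injOn]
  refine setIntegral_congr_fun measurableSet_Ioi fun p (hp : 0 < p) => ?_
  rw [smul_eq_mul, (h (1 + p) (by linarith)).2]

end IsPhiBranch

theorem integral_exp_neg_mul_phi_eq_branches {s₁ s₂ : ℝ → ℝ} (h₁ : IsPhiBranch s₁ (Ioo 0 1))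
    (h₂ : IsPhiBranch s₂ (Ioi 1)) {a : ℝ} (ha : 0 < a) :
    ∫ x in Ioi 0, Real.exp (-a * phi x) =
      Real.exp (-a) * ∫ p in Ioi 0, Real.exp (-a * p) * (deriv s₂ (1 + p) - deriv s₁ (1 + p)) := by
  set g : ℝ → ℝ := fun t => Real.exp (-a * t)
  have hint : IntegrableOn (fun x => g (phi x)) (Ioi 0) := integrableOn_exp_neg_mul_phi ha
  have hd₁ : ∀ t, 1 < t → DifferentiableAt ℝ s₁ t := fun t ht =>
    (h₁.hasDerivAt_of_Ioo ht).differentiableAt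
  have hd₂ : ∀ t, 1 < t → DifferentiableAt ℝ s₂ t := fun t ht =>
    (h₂.hasDerivAt_of_Ioi ht).differentiableAt
  have hint₁ := (h₁.integrableOn_comp_phi_iff h₁.bijOn_Ioo hd₁ g).1
    (hint.mono_set Ioo_subset_Ioi_self)
  have hint₂ := (h₂.integrableOn_comp_phi_iff h₂.bijOn_Ioi hd₂ g).1
    (hint.mono_set (Ioi_subset_Ioi zero_le_one))
  have hsplit :
      ∫ x in Ioi 0, g (phi x) = (∫ x in Ioo 0 1, g (phi x)) + ∫ x in Ioi 1, g (phi x) := by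
    rw [← Ioc_union_Ioi_eq_Ioi zero_le_one, setIntegral_union Ioc_disjoint_Ioi_same
      measurableSet_Ioi (hint.mono_set Ioc_subset_Ioi_self)
      (hint.mono_set (Ioi_subset_Ioi zero_le_one)), integral_Ioc_eq_integral_Ioo]
  rw [hsplit, h₁.integral_comp_phi h₁.bijOn_Ioo hd₁, h₂.integral_comp_phi h₂.bijOn_Ioi hd₂,
    ← integral_add hint₁ hint₂, ← integral_const_mul]
  refine setIntegral_congr_fun measurableSet_Ioi fun p hp => ?_
  have ht : 1 < 1 + p := by linarith [mem_Ioi.1 hp]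
  rw [abs_of_neg (h₁.deriv_neg_of_Ioo ht), abs_of_pos (h₂.deriv_pos_of_Ioi ht)]
  simp only [g, mul_add, mul_one, Real.exp_add]
  ring

/-- Borel-summed Stirling formula: `n! = n^{n+1} e^{-n} ∫_0^∞ e^{-np} G(p) dp`, where
`G(p) = s₂'(1+p) - s₁'(1+p)` and `s₁ : (1,∞) → (0,1)`, `s₂ : (1,∞) → (1,∞)` are the two
inverse branches of `s ↦ s - ln s`. -/
theorem stmt7 (s₁ s₂ : ℝ → ℝ)
    (h₁ : ∀ t : ℝ, 1 < t → s₁ t ∈ Ioo (0 : ℝ) 1 ∧ s₁ t - Real.log (s₁ t) = t)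
    (h₂ : ∀ t : ℝ, 1 < t → s₂ t ∈ Ioi (1 : ℝ) ∧ s₂ t - Real.log (s₂ t) = t)
    (n : ℕ) (hn : 0 < n) :
    (n.factorial : ℝ) =
      (n : ℝ) ^ (n + 1) * Real.exp (-(n : ℝ)) *
        ∫ p in Ioi (0 : ℝ), Real.exp (-(n : ℝ) * p) * (deriv s₂ (1 + p) - deriv s₁ (1 + p)) := by
  have hn' : (0 : ℝ) < n := Nat.cast_pos.2 hn
  rw [← Real.Gamma_nat_eq_factorial, Gamma_add_one_eq_integral_exp_neg_mul_phi hn',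
    integral_exp_neg_mul_phi_eq_branches h₁ h₂ hn', ← Nat.cast_add_one, Real.rpow_natCast,
    mul_assoc]
end

section
/- Let G(p) = s₂'(1+p) − s₁'(1+p) with s₁, s₂ the two inverse branches of s ↦ s − ln s as above. Then G(p) → 1 as p → ∞, and G(p)·√p extends to a function analytic in √p near p = 0 (G(p) ~ √(2/p) as p → 0⁺). -/
open Set Filter

noncomputable section Stmt10Aux
open Real

lemma aux_log_analytic {f : ℝ → ℝ} {x : ℝ} (hf : AnalyticAt ℝ f x) (hx : 0 < f x) :
    AnalyticAt ℝ (fun w => Real.log (f w)) x := by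
  have h1 : AnalyticAt ℂ Complex.log ((f x : ℝ) : ℂ) :=
    analyticAt_clog (by simp [Complex.mem_slitPlane_iff, hx])
  have h2 : AnalyticAt ℝ Complex.log ((f x : ℝ) : ℂ) := h1.restrictScalars
  have h3 : AnalyticAt ℝ (fun w : ℝ => ((f w : ℝ) : ℂ)) x :=
    (Complex.ofRealCLM.analyticAt (f x) : AnalyticAt ℝ (fun y : ℝ => (y : ℂ)) (f x)).comp hf
  have h4 : AnalyticAt ℝ (fun w : ℝ => Complex.log ((f w : ℝ) : ℂ)) x :=
    AnalyticAt.comp (f := fun w : ℝ => ((f w : ℝ) : ℂ)) (x := x) h2 h3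
  have h5 : AnalyticAt ℝ (fun w : ℝ => (Complex.log ((f w : ℝ) : ℂ)).re) x :=
    (Complex.reCLM.analyticAt _).comp h4
  refine h5.congr ?_
  have : ∀ᶠ w in nhds x, 0 < f w := hf.continuousAt.eventually (eventually_gt_nhds hx)
  filter_upwards [this] with w _ using (Complex.log_ofReal_re (f w))

lemma aux_phi_anti : StrictAntiOn (fun s : ℝ => s - Real.log s) (Ioo (0:ℝ) 1) := by
  apply strictAntiOn_of_deriv_neg (convex_Ioo 0 1)
  · apply ContinuousOn.sub continuousOn_id
    exact fun x hx => (Real.continuousAt_log (ne_of_gt hx.1)).continuousWithinAt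
  · intro x hx
    rw [interior_Ioo] at hx
    have h : HasDerivAt (fun s : ℝ => s - Real.log s) (1 - x⁻¹) x :=
      (hasDerivAt_id x).sub (Real.hasDerivAt_log (ne_of_gt hx.1))
    rw [h.deriv]
    have : 1 < x⁻¹ := (one_lt_inv₀ hx.1).2 hx.2
    linarith

lemma aux_phi_mono : StrictMonoOn (fun s : ℝ => s - Real.log s) (Ioi (1:ℝ)) := by
  apply strictMonoOn_of_deriv_pos (convex_Ioi 1)
  · apply ContinuousOn.sub continuousOn_id
    exact fun x hx => (Real.continuousAt_log (by simp at hx; positivity)).continuousWithinAt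
  · intro x hx
    rw [interior_Ioi] at hx
    have h : HasDerivAt (fun s : ℝ => s - Real.log s) (1 - x⁻¹) x :=
      (hasDerivAt_id x).sub (Real.hasDerivAt_log (by simp at hx; positivity))
    rw [h.deriv]
    simp only [mem_Ioi] at hx
    have : x⁻¹ < 1 := inv_lt_one_of_one_lt₀ hx
    linarith

/-- the derivative of a branch of the inverse of `s - log s` -/
lemma aux_deriv_branch {S : Set ℝ} (hS : IsOpen S) (hinj : ∀ x ∈ S, ∀ y ∈ S,
      x - Real.log x = y - Real.log y → x = y)
    (hpos : ∀ x ∈ S, 0 < x) (hone : ∀ x ∈ S, x ≠ 1)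
    (s : ℝ → ℝ) (hs : ∀ t : ℝ, 1 < t → s t ∈ S ∧ s t - Real.log (s t) = t)
    {t : ℝ} (ht : 1 < t) : HasDerivAt s (s t / (s t - 1)) t := by
  obtain ⟨hmem, heq⟩ := hs t ht
  set a := s t with ha
  have ha0 : 0 < a := hpos a hmem
  have ha1 : a ≠ 1 := hone a hmem
  have hφ : HasStrictDerivAt (fun s : ℝ => s - Real.log s) (1 - a⁻¹) a :=
    (hasStrictDerivAt_id a).sub (Real.hasStrictDerivAt_log (ne_of_gt ha0))
  have hd' : (1 - a⁻¹) ≠ 0 := by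
    intro h
    apply ha1
    field_simp at h
    linarith
  set ψ := hφ.localInverse _ _ _ hd' with hψ
  have hφa : (fun s : ℝ => s - Real.log s) a = t := heq
  have hψcont : ContinuousAt ψ t := by
    have := hφ.hasStrictFDerivAt_equiv hd' |>.localInverse_continuousAt
    rwa [heq] at this
  have hψa : ψ t = a := by
    have := hφ.hasStrictFDerivAt_equiv hd' |>.localInverse_apply_image
    rwa [heq] at this
  have hright : ∀ᶠ y in nhds t, ψ y - Real.log (ψ y) = y := by
    have := hφ.hasStrictFDerivAt_equiv hd' |>.eventually_right_inverse
    rwa [heq] at this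
  have hev : s =ᶠ[nhds t] ψ := by
    have h1 : ∀ᶠ y in nhds t, 1 < y := eventually_gt_nhds ht
    have h2 : ∀ᶠ y in nhds t, ψ y ∈ S := by
      apply hψcont.eventually_mem
      rw [hψa]; exact hS.mem_nhds hmem
    filter_upwards [h1, h2, hright] with y hy1 hy2 hy3
    obtain ⟨hm, he⟩ := hs y hy1
    exact hinj _ hm _ hy2 (by rw [he]; exact hy3.symm)
  have hinv : HasStrictDerivAt ψ (1 - a⁻¹)⁻¹ t := by
    have := hφ.to_localInverse (hf' := hd')
    rwa [heq] at this
  have : HasDerivAt s ((1 - a⁻¹)⁻¹) t := by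
    rw [hev.hasDerivAt_iff]
    exact hinv.hasDerivAt
  convert this using 1
  field_simp


lemma aux_tendsto (s₁ s₂ : ℝ → ℝ)
    (h₁ : ∀ t : ℝ, 1 < t → s₁ t ∈ Ioo (0 : ℝ) 1 ∧ s₁ t - Real.log (s₁ t) = t)
    (h₂ : ∀ t : ℝ, 1 < t → s₂ t ∈ Ioi (1 : ℝ) ∧ s₂ t - Real.log (s₂ t) = t)
    (d₁ : ∀ t : ℝ, 1 < t → deriv s₁ t = s₁ t / (s₁ t - 1))
    (d₂ : ∀ t : ℝ, 1 < t → deriv s₂ t = s₂ t / (s₂ t - 1)) :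
    Tendsto (fun p : ℝ => deriv s₂ (1 + p) - deriv s₁ (1 + p)) atTop (nhds 1) := by
  have key : ∀ᶠ p in atTop, ‖(deriv s₂ (1+p) - deriv s₁ (1+p)) - 1‖ ≤ 1/p + 2*Real.exp (-p) := by
    filter_upwards [eventually_ge_atTop (1:ℝ)] with p hp
    have ht : 1 < 1 + p := by linarith
    obtain ⟨ha, hea⟩ := h₂ _ ht
    obtain ⟨hb, heb⟩ := h₁ _ ht
    rw [mem_Ioi] at ha
    obtain ⟨hb0, hb1⟩ := hb
    set a := s₂ (1+p)
    set b := s₁ (1+p)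
    have ha2 : 1 + p ≤ a := by
      have : 0 ≤ Real.log a := Real.log_nonneg (le_of_lt ha)
      linarith
    have hbexp : b ≤ Real.exp (-p) := by
      calc b = Real.exp (Real.log b) := (Real.exp_log hb0).symm
      _ ≤ Real.exp (-p) := Real.exp_le_exp.mpr (by linarith)
    have hexp1 : Real.exp (-p) ≤ Real.exp (-1) := Real.exp_le_exp.mpr (by linarith)
    have hbhalf : b ≤ 1/2 := by
      have h1 : Real.exp (-1) ≤ 1/2 := by
        rw [Real.exp_neg]
        rw [inv_le_comm₀ (Real.exp_pos 1) (by norm_num)]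
        have := Real.exp_one_gt_d9
        linarith
      linarith
    rw [d₂ _ ht, d₁ _ ht]
    have p1 : (0:ℝ) < a - 1 := by linarith
    have p2 : (0:ℝ) < 1 - b := by linarith
    have ne1 : a - 1 ≠ 0 := ne_of_gt p1
    have ne2 : b - 1 ≠ 0 := by intro h; apply absurd p2; simp; linarith
    have e1 : a/(a-1) - b/(b-1) - 1 = 1/(a-1) + b/(1-b) := by
      have ne3 : 1 - b ≠ 0 := ne_of_gt p2
      field_simp
      ring
    rw [e1]
    have b1 : 1/(a-1) ≤ 1/p := by
      apply one_div_le_one_div_of_le (by linarith) (by linarith)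
    have b2 : b/(1-b) ≤ 2 * Real.exp (-p) := by
      rw [div_le_iff₀ p2]
      nlinarith [Real.exp_pos (-p)]
    have nn1 : 0 ≤ 1/(a-1) := by positivity
    have nn2 : 0 ≤ b/(1-b) := div_nonneg (le_of_lt hb0) (le_of_lt p2)
    rw [Real.norm_eq_abs, abs_of_nonneg (by linarith)]
    linarith
  have h0 : Tendsto (fun p : ℝ => 1/p + 2*Real.exp (-p)) atTop (nhds 0) := by
    have t1 : Tendsto (fun p : ℝ => 1/p) atTop (nhds 0) := by
      simpa only [one_div] using tendsto_inv_atTop_zero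
    have t2 : Tendsto (fun p : ℝ => 2*Real.exp (-p)) atTop (nhds 0) := by
      simpa using (Real.tendsto_exp_neg_atTop_nhds_zero).const_mul (2:ℝ)
    simpa using t1.add t2
  have := squeeze_zero_norm' key h0
  exact tendsto_sub_nhds_zero_iff.mp this

lemma aux_g : ∃ g : ℝ → ℝ, AnalyticAt ℝ g 0 ∧ g 0 = 1/2 ∧
    ∀ w : ℝ, w ≠ 0 → w - Real.log (1 + w) = w^2 * g w := by
  set f : ℝ → ℝ := fun w => w - Real.log (1 + w) with hfdef
  have hf : AnalyticAt ℝ f 0 := by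
    apply AnalyticAt.sub analyticAt_id
    exact aux_log_analytic (analyticAt_const.add analyticAt_id) (by norm_num)
  have hfc : ContinuousAt f 0 := hf.continuousAt
  obtain ⟨pf, hpf⟩ := hf
  set g : ℝ → ℝ := (Function.swap dslope 0)^[2] f with hgdef
  have hg : AnalyticAt ℝ g 0 :=
    ⟨_, HasFPowerSeriesAt.has_fpower_series_iterate_dslope_fslope 2 hpf⟩
  have f0 : f 0 = 0 := by simp [hfdef]
  have hdf : HasDerivAt f 0 0 := by
    have h1 : HasDerivAt (fun w : ℝ => 1 + w) 1 0 := by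
      simpa using (hasDerivAt_id (0:ℝ)).const_add 1
    have h2 : HasDerivAt (fun w : ℝ => Real.log (1 + w)) ((1 + (0:ℝ))⁻¹ * 1) 0 :=
      (Real.hasDerivAt_log (by norm_num)).comp 0 h1
    have h3 : HasDerivAt f (1 - (1 + (0:ℝ))⁻¹ * 1) 0 := (hasDerivAt_id 0).sub h2
    convert h3 using 1
    norm_num
  have df : deriv f 0 = 0 := hdf.deriv
  have gval : ∀ w : ℝ, w ≠ 0 → g w = f w / w^2 := by
    intro w hw
    have hg2 : g w = dslope (dslope f 0) 0 w := by
      rw [hgdef]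
      simp [Function.iterate_succ, Function.comp, Function.swap]
    rw [hg2, dslope_of_ne _ hw, slope_def_field, dslope_same, df, dslope_of_ne _ hw,
      slope_def_field, f0]
    rw [sub_zero, sub_zero, sub_zero, div_div, sq]
  have hval : ∀ w : ℝ, w ≠ 0 → f w = w^2 * g w := by
    intro w hw
    rw [gval w hw]
    field_simp
  have g0 : g 0 = 1/2 := by
    have l1 : Tendsto g (nhdsWithin 0 {(0:ℝ)}ᶜ) (nhds (g 0)) :=
      hg.continuousAt.continuousWithinAt.tendsto
    have l2 : Tendsto g (nhdsWithin 0 {(0:ℝ)}ᶜ) (nhds (1/2)) := by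
      have lh : Tendsto (fun w : ℝ => f w / w^2) (nhdsWithin 0 {(0:ℝ)}ᶜ) (nhds (1/2)) := by
        apply HasDerivAt.lhopital_zero_nhdsNE (f' := fun w => 1 - (1+w)⁻¹) (g' := fun w => 2*w)
        · filter_upwards [eventually_nhdsWithin_of_eventually_nhds
              (eventually_gt_nhds (show (-1:ℝ) < (0:ℝ) by norm_num))] with x hx
          have hx1 : (0:ℝ) < 1 + x := by linarith
          have h2 : HasDerivAt (fun w : ℝ => Real.log (1 + w)) ((1 + x)⁻¹ * 1) x :=
            (Real.hasDerivAt_log (ne_of_gt hx1)).comp x ((hasDerivAt_id x).const_add 1)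
          have h3 : HasDerivAt f (1 - (1 + x)⁻¹ * 1) x := (hasDerivAt_id x).sub h2
          convert h3 using 1
          simp
        · filter_upwards with x
          simpa using hasDerivAt_pow 2 x
        · filter_upwards [self_mem_nhdsWithin] with x hx
          simp only [mem_compl_iff, mem_singleton_iff] at hx
          simp [hx]
        · have := hfc.tendsto
          rw [f0] at this
          exact this.mono_left nhdsWithin_le_nhds
        · have : Tendsto (fun w : ℝ => w^2) (nhds 0) (nhds 0) := by
            simpa using ((continuous_pow 2).tendsto (0:ℝ))
          exact this.mono_left nhdsWithin_le_nhds
        · have tc : ContinuousAt (fun x : ℝ => (2*(1+x))⁻¹) 0 :=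
            ((continuousAt_const.mul (continuousAt_const.add continuousAt_id)).inv₀ (by norm_num))
          have tt : Tendsto (fun x : ℝ => (2*(1+x))⁻¹) (nhdsWithin 0 {(0:ℝ)}ᶜ) (nhds (1/2)) := by
            have h := tc.tendsto
            have h10 : (2*(1+(0:ℝ)))⁻¹ = 1/2 := by norm_num
            rw [h10] at h
            exact h.mono_left nhdsWithin_le_nhds
          refine tt.congr' ?_
          filter_upwards [self_mem_nhdsWithin, eventually_nhdsWithin_of_eventually_nhds
              (eventually_gt_nhds (show (-1:ℝ) < (0:ℝ) by norm_num))] with x hx0 hx1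
          simp only [mem_compl_iff, mem_singleton_iff] at hx0
          have hx2 : (1:ℝ) + x ≠ 0 := by intro h; linarith
          field_simp
          ring
      refine lh.congr' ?_
      filter_upwards [self_mem_nhdsWithin] with w hw
      exact (gval w hw).symm
    exact tendsto_nhds_unique l1 l2
  exact ⟨g, hg, g0, hval⟩


lemma aux_q : ∃ q : ℝ → ℝ, AnalyticAt ℝ q 0 ∧ q 0 = 1 ∧
    ∀ᶠ u in nhds (0:ℝ), |u * q u| < 1/2 ∧
      (1 + u * q u) - Real.log (1 + u * q u) = 1 + u^2/2 := by
  obtain ⟨g, hg, g0, hgval⟩ := aux_g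
  set r : ℝ → ℝ := fun w => Real.exp (Real.log (2 * g w) * (1/2)) with hrdef
  have hr : AnalyticAt ℝ r 0 := by
    apply AnalyticAt.rexp
    exact (aux_log_analytic (analyticAt_const.mul hg) (by show 0 < 2 * g 0; rw [g0]; norm_num)).mul
      analyticAt_const
  have r0 : r 0 = 1 := by
    rw [hrdef]
    simp only [g0]
    norm_num
  have hgpos : ∀ᶠ w in nhds (0:ℝ), 0 < g w :=
    hg.continuousAt.eventually (by rw [g0]; exact eventually_gt_nhds (by norm_num))
  have hFsq : ∀ᶠ w in nhds (0:ℝ), (w * r w)^2 = 2 * (w - Real.log (1 + w)) := by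
    filter_upwards [hgpos] with w hw
    have hrsq : (r w)^2 = 2 * g w := by
      rw [hrdef]
      rw [← Real.exp_nat_mul]
      push_cast
      rw [show (2:ℝ) * (Real.log (2*g w) * (1/2)) = Real.log (2*g w) by ring]
      exact Real.exp_log (by linarith)
    rcases eq_or_ne w 0 with h | h
    · simp [h]
    · rw [mul_pow, hrsq, hgval w h]
      ring
  -- strict derivative of F := fun w => w * r w at 0 is 1
  obtain ⟨pr, hpr⟩ := id hr
  have hrs : HasStrictDerivAt r (pr.coeff 1) 0 := hpr.hasStrictDerivAt
  have hFs : HasStrictDerivAt (fun w : ℝ => w * r w) 1 0 := by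
    have h : HasStrictDerivAt (fun w : ℝ => w * r w) (1 * r 0 + 0 * pr.coeff 1) 0 :=
      (hasStrictDerivAt_id (0:ℝ)).mul hrs
    convert h using 1
    simp [r0]
  set F : ℝ → ℝ := fun w => w * r w with hFdef
  have hF : AnalyticAt ℝ F 0 := analyticAt_id.mul hr
  have F0 : F 0 = 0 := by simp [hFdef]
  set Φ := HasStrictFDerivAt.toOpenPartialHomeomorph F (hFs.hasStrictFDerivAt_equiv one_ne_zero)
    with hΦdef
  have hcoe : ⇑Φ = F := HasStrictFDerivAt.toOpenPartialHomeomorph_coe _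
  have h0 : (0:ℝ) ∈ Φ.source := HasStrictFDerivAt.mem_toOpenPartialHomeomorph_source _
  set H : ℝ → ℝ := ⇑Φ.symm with hHdef
  -- left and right inverses
  have hleft : ∀ᶠ w in nhds (0:ℝ), H (F w) = w := by
    have := Φ.eventually_left_inverse h0
    rw [hcoe] at this
    exact this
  have hright : ∀ᶠ u in nhds (0:ℝ), F (H u) = u := by
    have := Φ.eventually_right_inverse' h0
    rw [hcoe, F0] at this
    exact this
  have H0 : H 0 = 0 := by
    have := Φ.left_inv h0
    rw [hcoe, F0] at this
    exact this
  have hHs : HasStrictDerivAt H 1 0 := by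
    have := hFs.to_local_left_inverse one_ne_zero hleft
    rw [F0, inv_one] at this
    exact this
  have hHcont : ContinuousAt H 0 := hHs.hasDerivAt.continuousAt
  -- analyticity of H at 0
  obtain ⟨pF, hpF⟩ := hF
  have hpF' : HasFPowerSeriesAt (⇑Φ) pF 0 := by rw [hcoe]; exact hpF
  have hc1 : pF.coeff 1 = 1 := by
    have := hpF.deriv
    rw [hFs.hasDerivAt.deriv] at this
    exact this.symm
  have hp1 : pF 1 = (continuousMultilinearCurryFin1 ℝ ℝ ℝ).symm
      (ContinuousLinearEquiv.refl ℝ ℝ : ℝ →L[ℝ] ℝ) := by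
    apply ContinuousMultilinearMap.ext
    intro m
    have hm : m = fun _ => m 0 := funext (fun i => by rw [Subsingleton.elim i 0])
    rw [hm]
    rw [FormalMultilinearSeries.apply_eq_pow_smul_coeff, hc1]
    simp
  have hsymm := Φ.hasFPowerSeriesAt_symm h0 hpF' hp1
  have hΦ0 : Φ 0 = 0 := by rw [hcoe, F0]
  rw [hΦ0] at hsymm
  have hH : AnalyticAt ℝ H 0 := ⟨_, hsymm⟩
  -- the quotient q
  obtain ⟨pH, hpH⟩ := hH
  set q : ℝ → ℝ := dslope H 0 with hqdef
  have hq : AnalyticAt ℝ q 0 := ⟨_, hpH.has_fpower_series_dslope_fslope⟩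
  have q0 : q 0 = 1 := by
    rw [hqdef, dslope_same]
    exact hHs.hasDerivAt.deriv
  have Hq : ∀ u : ℝ, H u = u * q u := by
    intro u
    rcases eq_or_ne u 0 with h | h
    · simp [h, H0]
    · rw [hqdef, dslope_of_ne _ h, slope_def_field, H0]
      field_simp
      ring
  have hsmall : ∀ᶠ u in nhds (0:ℝ), |H u| < 1/2 := by
    have h := hHcont.eventually_mem (show Metric.ball (0:ℝ) (1/2) ∈ nhds (H 0) by
      rw [H0]; exact Metric.ball_mem_nhds _ (by norm_num))
    filter_upwards [h] with u hu
    simpa [Real.dist_eq] using hu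
  have heq : ∀ᶠ u in nhds (0:ℝ), (1 + H u) - Real.log (1 + H u) = 1 + u^2/2 := by
    have hpull : ∀ᶠ u in nhds (0:ℝ), (F (H u))^2 = 2 * (H u - Real.log (1 + H u)) := by
      have ht : Tendsto H (nhds 0) (nhds 0) := by
        have := hHcont.tendsto
        rwa [H0] at this
      exact ht.eventually hFsq
    filter_upwards [hright, hpull] with u e1 e2
    rw [e1] at e2
    linarith
  refine ⟨q, hq, q0, ?_⟩
  filter_upwards [hsmall, heq] with u h1 h2
  rw [← Hq u]
  exact ⟨h1, h2⟩

end Stmt10Aux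

/-- With `s₁, s₂` the two inverse branches of `s ↦ s - ln s` and
`G(p) = s₂'(1+p) - s₁'(1+p)`: `G(p) → 1` as `p → ∞`, and `G(p)·√p` extends to a function
analytic in `√p` near `p = 0`, with value `√2` at `0` (i.e. `G(p) ~ √(2/p)` as `p → 0⁺`). -/
theorem stmt10 (s₁ s₂ : ℝ → ℝ)
    (h₁ : ∀ t : ℝ, 1 < t → s₁ t ∈ Ioo (0 : ℝ) 1 ∧ s₁ t - Real.log (s₁ t) = t)
    (h₂ : ∀ t : ℝ, 1 < t → s₂ t ∈ Ioi (1 : ℝ) ∧ s₂ t - Real.log (s₂ t) = t) :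
    Tendsto (fun p : ℝ => deriv s₂ (1 + p) - deriv s₁ (1 + p)) atTop (nhds 1) ∧
    ∃ A : ℝ → ℝ, AnalyticAt ℝ A 0 ∧ A 0 = Real.sqrt 2 ∧
      ∀ᶠ p in nhdsWithin (0 : ℝ) (Ioi 0),
        (deriv s₂ (1 + p) - deriv s₁ (1 + p)) * Real.sqrt p = A (Real.sqrt p) := by
  have d₁ : ∀ t : ℝ, 1 < t → HasDerivAt s₁ (s₁ t / (s₁ t - 1)) t := by
    intro t ht
    refine aux_deriv_branch isOpen_Ioo ?_ (fun x hx => hx.1) (fun x hx => ne_of_lt hx.2)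
      s₁ h₁ ht
    intro x hx y hy hxy
    exact aux_phi_anti.injOn hx hy hxy
  have d₂ : ∀ t : ℝ, 1 < t → HasDerivAt s₂ (s₂ t / (s₂ t - 1)) t := by
    intro t ht
    refine aux_deriv_branch isOpen_Ioi ?_ (fun x hx => lt_trans one_pos hx)
      (fun x hx => ne_of_gt hx) s₂ h₂ ht
    intro x hx y hy hxy
    exact aux_phi_mono.injOn hx hy hxy
  constructor
  · exact aux_tendsto s₁ s₂ h₁ h₂ (fun t ht => (d₁ t ht).deriv) (fun t ht => (d₂ t ht).deriv)
  obtain ⟨q, hq, q0, hev⟩ := aux_q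
  refine ⟨fun x => (Real.sqrt 2)⁻¹ * ((q (Real.sqrt 2 * x))⁻¹ + (q (-(Real.sqrt 2 * x)))⁻¹),
    ?_, ?_, ?_⟩
  · -- analyticity of A
    have hlin : AnalyticAt ℝ (fun x : ℝ => Real.sqrt 2 * x) 0 := analyticAt_const.mul analyticAt_id
    have h1 : AnalyticAt ℝ (fun x : ℝ => q (Real.sqrt 2 * x)) 0 :=
      AnalyticAt.comp_of_eq hq hlin (by norm_num)
    have h2 : AnalyticAt ℝ (fun x : ℝ => q (-(Real.sqrt 2 * x))) 0 :=
      AnalyticAt.comp_of_eq hq hlin.neg (by norm_num)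
    have h1' : AnalyticAt ℝ (fun x : ℝ => (q (Real.sqrt 2 * x))⁻¹) 0 :=
      h1.inv (by rw [show Real.sqrt 2 * 0 = 0 by ring, q0]; norm_num)
    have h2' : AnalyticAt ℝ (fun x : ℝ => (q (-(Real.sqrt 2 * x)))⁻¹) 0 :=
      h2.inv (by rw [show -(Real.sqrt 2 * 0) = 0 by ring, q0]; norm_num)
    exact analyticAt_const.mul (h1'.add h2')
  · -- value at 0
    have hs2 : Real.sqrt 2 * Real.sqrt 2 = 2 := Real.mul_self_sqrt (by norm_num)
    have hs2' : Real.sqrt 2 ≠ 0 := by positivity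
    show (Real.sqrt 2)⁻¹ * ((q (Real.sqrt 2 * 0))⁻¹ + (q (-(Real.sqrt 2 * 0)))⁻¹) = Real.sqrt 2
    rw [mul_zero, neg_zero, q0]
    rw [inv_one]
    field_simp
    linarith
  · -- eventual equality
    have hq2 : ∀ᶠ u in nhds (0:ℝ), 1/2 < q u :=
      hq.continuousAt.eventually (by rw [q0]; exact eventually_gt_nhds (by norm_num))
    obtain ⟨ε, hε, hball⟩ := Metric.eventually_nhds_iff_ball.mp (hev.and hq2)
    have hIoo : Ioo (0:ℝ) (ε^2/2) ∈ nhdsWithin (0:ℝ) (Ioi 0) :=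
      Ioo_mem_nhdsGT_of_mem ⟨le_refl 0, by positivity⟩
    filter_upwards [hIoo] with p hp
    obtain ⟨hp0, hpε⟩ := hp
    have ht : (1:ℝ) < 1 + p := by linarith
    set u := Real.sqrt (2*p) with hudef
    have hu0 : 0 < u := Real.sqrt_pos.mpr (by linarith)
    have husq : u^2 = 2*p := Real.sq_sqrt (by linarith)
    have huε : u < ε := by
      rw [hudef]
      rw [show ε = Real.sqrt (ε^2) from (Real.sqrt_sq (le_of_lt hε)).symm]
      exact Real.sqrt_lt_sqrt (by linarith) (by linarith)
    have hmem1 : u ∈ Metric.ball (0:ℝ) ε := by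
      simp [Real.dist_eq, abs_of_pos hu0, huε]
    have hmem2 : -u ∈ Metric.ball (0:ℝ) ε := by
      simp [Real.dist_eq, abs_of_pos hu0, huε]
    obtain ⟨⟨hs2a, hs2b⟩, hq2u⟩ := hball u hmem1
    obtain ⟨⟨hs1a, hs1b⟩, hq1u⟩ := hball (-u) hmem2
    set w₂ := u * q u with hw2def
    set w₁ := (-u) * q (-u) with hw1def
    have hw2pos : 0 < w₂ := mul_pos hu0 (by linarith)
    have hw1neg : w₁ < 0 := mul_neg_of_neg_of_pos (by linarith) (by linarith)
    have hw1lt : -(1/2) < w₁ := by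
      have := abs_lt.mp hs1a
      exact this.1
    have hup : u^2/2 = p := by rw [husq]; ring
    -- identify the branches
    have es₂ : s₂ (1+p) = 1 + w₂ := by
      obtain ⟨hm, he⟩ := h₂ (1+p) ht
      apply aux_phi_mono.injOn hm (by simp [mem_Ioi]; linarith)
      show s₂ (1+p) - Real.log (s₂ (1+p)) = (1 + w₂) - Real.log (1 + w₂)
      rw [he, hs2b, hup]
    have es₁ : s₁ (1+p) = 1 + w₁ := by
      obtain ⟨hm, he⟩ := h₁ (1+p) ht
      apply aux_phi_anti.injOn hm (by constructor <;> [linarith; linarith])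
      show s₁ (1+p) - Real.log (s₁ (1+p)) = (1 + w₁) - Real.log (1 + w₁)
      rw [he, hs1b, show ((-u:ℝ))^2 = u^2 by ring, hup]
    rw [(d₂ (1+p) ht).deriv, (d₁ (1+p) ht).deriv, es₁, es₂]
    -- algebra
    have hsqrt2 : Real.sqrt 2 ≠ 0 := by positivity
    have hu2 : u = Real.sqrt 2 * Real.sqrt p := by
      rw [hudef, Real.sqrt_mul (by norm_num : (0:ℝ) ≤ 2)]
    have hsp : Real.sqrt p = u / Real.sqrt 2 := by
      rw [hu2]; field_simp
    rw [← hu2]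
    have hqu : q u ≠ 0 := by linarith
    have hqu' : q (-u) ≠ 0 := by linarith
    have hu' : u ≠ 0 := ne_of_gt hu0
    have hw2ne : w₂ ≠ 0 := ne_of_gt hw2pos
    have hw1ne : w₁ ≠ 0 := ne_of_lt hw1neg
    rw [hsp, show (1:ℝ) + w₂ - 1 = w₂ by ring, show (1:ℝ) + w₁ - 1 = w₁ by ring,
      hw2def, hw1def]
    field_simp
    ring
end

section
/- For |p| < 1, Σ_{k=1}^∞ p^k k^{-1/2} = (p/√π) ∫_0^∞ ds / ((1+s)√(ln(1+s))·(s+1−p)). -/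
open MeasureTheory Set

/-- For `|p| < 1`,
`Σ_{k=1}^∞ p^k k^{-1/2} = (p/√π) ∫_0^∞ ds / ((1+s)·√(ln(1+s))·(s+1-p))`. -/
theorem stmt15 (p : ℂ) (hp : ‖p‖ < 1) :
    ∑' k : ℕ, p ^ (k + 1) / (Real.sqrt (k + 1) : ℂ) =
      p / (Real.sqrt Real.pi : ℂ) *
        ∫ s in Ioi (0 : ℝ),
          1 / ((1 + (s : ℂ)) * (Real.sqrt (Real.log (1 + s)) : ℂ) * ((s : ℂ) + 1 - p)) := by
  set F : ℝ → ℂ := fun t => 1 / ((Real.exp t : ℂ) - p) with hF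
  set g : ℝ → ℂ := fun s =>
    1 / ((1 + (s : ℂ)) * (Real.sqrt (Real.log (1 + s)) : ℂ) * ((s : ℂ) + 1 - p)) with hg
  -- exp t - p ≠ 0 for t > 0
  have hnz : ∀ t : ℝ, 0 < t → ((Real.exp t : ℂ) - p) ≠ 0 := by
    intro t ht h
    rw [sub_eq_zero] at h
    have h3 : ‖p‖ = Real.exp t := by rw [← h, Complex.norm_real, Real.norm_eq_abs,
      abs_of_pos (Real.exp_pos t)]
    have : (1:ℝ) ≤ Real.exp t := Real.one_le_exp ht.le
    linarith
  -- Part 1: Mellin transform of F at 1/2 is the Dirichlet series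
  have key : HasSum (fun k : ℕ => Complex.Gamma (1/2) * p ^ k / ((k + 1 : ℝ) : ℂ) ^ (1/2 : ℂ))
      (mellin F (1/2)) := by
    refine hasSum_mellin (p := fun k : ℕ => (k : ℝ) + 1) (fun k => Or.inr (by positivity))
      (by norm_num) (fun t ht => ?_) ?_
    · rw [mem_Ioi] at ht
      have h1 : ‖p * Complex.exp (-(t:ℂ))‖ < 1 := by
        rw [norm_mul, Complex.norm_exp]
        simp only [Complex.neg_re, Complex.ofReal_re]
        have he : Real.exp (-t) ≤ 1 := Real.exp_le_one_iff.2 (by linarith)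
        nlinarith [norm_nonneg p, Real.exp_pos (-t)]
      have hg := (hasSum_geometric_of_norm_lt_one h1).mul_left (Complex.exp (-(t:ℂ)))
      convert hg using 2 with k
      · rfl
      · rw [mul_pow, ← Complex.exp_nat_mul]
        have h3 : Complex.exp (-(t:ℂ)) * Complex.exp ((k:ℂ) * -(t:ℂ)) =
            Complex.exp ((-((k:ℝ) + 1) * t : ℝ)) := by
          rw [← Complex.exp_add]; congr 1; push_cast; ring
        rw [Complex.ofReal_exp, ← h3]; ring
      · have h2 : (Complex.exp (t:ℂ)) - p ≠ 0 := by
          rw [← Complex.ofReal_exp]; exact hnz t ht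
        have hne : 1 - p * Complex.exp (-(t:ℂ)) ≠ 0 := by
          rw [Complex.exp_neg]
          intro h
          apply h2
          have := congrArg (· * Complex.exp (t:ℂ)) h
          simpa [sub_mul, mul_assoc, inv_mul_cancel₀ (Complex.exp_ne_zero (t:ℂ)),
            sub_eq_zero, eq_comm] using this
        simp only [hF, Complex.ofReal_exp]
        rw [Complex.exp_neg] at hne ⊢
        field_simp
    · refine Summable.of_nonneg_of_le (fun k => by positivity) (fun k => ?_)
        (summable_geometric_of_lt_one (norm_nonneg p) hp)
      rw [norm_pow]
      have h4 : (1:ℝ) ≤ ((k:ℝ) + 1) ^ ((1:ℂ)/2).re :=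
        Real.one_le_rpow (by linarith [Nat.cast_nonneg (α := ℝ) k]) (by norm_num)
      exact div_le_self (by positivity) h4
  -- Part 2: substitution s = exp q - 1
  have himg : (fun q : ℝ => Real.exp q - 1) '' Ioi 0 = Ioi 0 := by
    ext x
    simp only [mem_image, mem_Ioi]
    constructor
    · rintro ⟨q, hq, rfl⟩
      linarith [Real.add_one_le_exp q]
    · intro hx
      exact ⟨Real.log (1 + x), Real.log_pos (by linarith), by
        rw [Real.exp_log (by linarith)]; ring⟩
  have hsub : (∫ s in Ioi (0:ℝ), g s) = mellin F (1/2) := by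
    rw [← himg, integral_image_eq_integral_abs_deriv_smul measurableSet_Ioi
      (fun x _ => ((Real.hasDerivAt_exp x).sub_const 1).hasDerivWithinAt)
      (fun a _ b _ h => Real.exp_injective (by linarith [h] : Real.exp a = Real.exp b)) g]
    rw [mellin]
    refine setIntegral_congr_fun measurableSet_Ioi (fun q hq => ?_)
    rw [mem_Ioi] at hq
    have hsq : Real.sqrt q ≠ 0 := Real.sqrt_ne_zero'.2 hq
    have hcpow : ((q:ℂ)) ^ ((1:ℂ)/2 - 1) = (((Real.sqrt q)⁻¹ : ℝ) : ℂ) := by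
      have h5 : ((1:ℂ)/2 - 1) = ((-(1/2) : ℝ) : ℂ) := by norm_num
      rw [h5, ← Complex.ofReal_cpow hq.le, Real.rpow_neg hq.le, ← Real.sqrt_eq_rpow]
    have hlog : Real.log (1 + (Real.exp q - 1)) = q := by
      rw [show (1 + (Real.exp q - 1)) = Real.exp q by ring, Real.log_exp]
    have he : ((Real.exp q : ℝ) : ℂ) ≠ 0 := by
      simpa using (Real.exp_pos q).ne'
    have h2 := hnz q hq
    simp only [hg, hF, hcpow, hlog, abs_of_pos (Real.exp_pos q), Complex.ofReal_sub,
      Complex.ofReal_one, Complex.real_smul, smul_eq_mul]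
    have hrw : (1 + ((Real.exp q : ℂ) - 1)) = (Real.exp q : ℂ) := by ring
    have hrw2 : ((Real.exp q : ℂ) - 1 + 1 - p) = (Real.exp q : ℂ) - p := by ring
    rw [hrw, hrw2, mul_one_div,
      show ((Real.exp q : ℝ):ℂ) * (Real.sqrt q : ℂ) * (((Real.exp q : ℝ):ℂ) - p) =
        ((Real.exp q : ℝ):ℂ) * ((Real.sqrt q : ℂ) * (((Real.exp q : ℝ):ℂ) - p)) from by ring,
      div_mul_cancel_left₀ he, mul_inv, Complex.ofReal_inv, one_div]
  -- Part 3: assembly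
  rw [hsub, ← key.tsum_eq, ← tsum_mul_left]
  refine tsum_congr (fun k => ?_)
  have hπ : Complex.Gamma (1/2) = ((Real.sqrt Real.pi : ℝ) : ℂ) := by
    rw [Complex.Gamma_one_half_eq, show ((1:ℂ)/2) = ((1/2:ℝ):ℂ) from by norm_num,
      ← Complex.ofReal_cpow Real.pi_pos.le, ← Real.sqrt_eq_rpow]
  have hk : ((k + 1 : ℝ) : ℂ) ^ ((1:ℂ)/2) = ((Real.sqrt (k + 1) : ℝ) : ℂ) := by
    rw [show ((1:ℂ)/2) = ((1/2:ℝ):ℂ) from by norm_num,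
      ← Complex.ofReal_cpow (x := (k:ℝ)+1) (by positivity), ← Real.sqrt_eq_rpow]
  rw [hπ, hk]
  have hπ0 : (Real.sqrt Real.pi : ℂ) ≠ 0 := by
    simpa using (Real.sqrt_pos.2 Real.pi_pos).ne'
  have hk0 : (Real.sqrt ((k:ℝ) + 1) : ℂ) ≠ 0 := by
    simpa using (Real.sqrt_pos.2 (by positivity : (0:ℝ) < (k:ℝ)+1)).ne'
  field_simp
  ring
end

section
/- Let F be bounded, continuous and integrable on (0,∞), a ∈ ℂ∖{0}, f_k = a^{-k}∫_0^∞ e^{-kp}F(p)dp, and f(z) = Σ_{k≥1} f_k z^k for |z| < |a|. Then f extends analytically to ℂ ∖ (a·[1,∞)), i.e., to the complement of the ray {a·t : t ≥ 1}. -/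
/-!
With `q = z / (a e^p)` one has `z / (a e^p - z) = ∑_{k ≥ 1} q^k`, and `|q| ≤ |z| / |a| < 1` for
`p ≥ 0`, so by dominated convergence `f(z) = z ∫_0^∞ F(p) / (a e^p - z) dp` for `|z| < |a|`.
The right-hand side is defined and holomorphic wherever `z` stays away from the closed ray
`{a e^p : p ≥ 0} = a·[1,∞)`: there the kernel `1 / (a e^p - z)` is holomorphic in `z`, locally
uniformly bounded, and so is its derivative.
-/

open MeasureTheory Set

theorem isClosed_ray (a : ℂ) : IsClosed {z : ℂ | ∃ t : ℝ, 1 ≤ t ∧ z = t * a} := by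
  have h : {z : ℂ | ∃ t : ℝ, 1 ≤ t ∧ z = t * a} = (fun t : ℝ => t • a) '' Ici 1 := by
    ext z
    simp [Complex.real_smul, eq_comm]
  rw [h]
  exact isClosedMap_smul_left a _ isClosed_Ici

theorem differentiableOn_integral_div_sub {α : Type*} [MeasurableSpace α] {μ : Measure α}
    {F φ : α → ℂ} {T : Set ℂ} (hT : IsClosed T) (hφT : ∀ᵐ p ∂μ, φ p ∈ T)
    (hφ : AEStronglyMeasurable φ μ) (hF : Integrable F μ) :
    DifferentiableOn ℂ (fun z => ∫ p, F p / (φ p - z) ∂μ) Tᶜ := by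
  intro z₀ hz₀
  obtain ⟨ε, hε, hball⟩ := Metric.isOpen_iff.mp hT.isOpen_compl z₀ hz₀
  have hdist : ∀ᵐ p ∂μ, ∀ z ∈ Metric.ball z₀ (ε / 2), ε / 2 ≤ ‖φ p - z‖ := by
    filter_upwards [hφT] with p hp z hz
    have hp₀ : ε ≤ ‖φ p - z₀‖ := by
      by_contra! h
      exact hball (mem_ball_iff_norm.mpr h) hp
    have := norm_sub_le_norm_sub_add_norm_sub (φ p) z z₀
    have := mem_ball_iff_norm.mp hz
    linarith
  have hmeas : ∀ (n : ℕ) (z : ℂ), AEStronglyMeasurable (fun p => F p / (φ p - z) ^ n) μ :=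
    fun n z => hF.1.div₀ ((hφ.sub aestronglyMeasurable_const).pow n)
  have hbound : ∀ n : ℕ, ∀ᵐ p ∂μ, ∀ z ∈ Metric.ball z₀ (ε / 2),
      ‖F p / (φ p - z) ^ n‖ ≤ ‖F p‖ / (ε / 2) ^ n := by
    intro n
    filter_upwards [hdist] with p hp z hz
    rw [norm_div, norm_pow]
    gcongr
    exact hp z hz
  have hderiv : ∀ᵐ p ∂μ, ∀ z ∈ Metric.ball z₀ (ε / 2),
      HasDerivAt (fun z => F p / (φ p - z)) (F p / (φ p - z) ^ 2) z := by
    filter_upwards [hdist] with p hp z hz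
    have hne : φ p - z ≠ 0 := norm_pos_iff.mp ((half_pos hε).trans_le (hp z hz))
    exact ((hasDerivAt_const z (F p)).div ((hasDerivAt_id z).const_sub (φ p)) hne).congr_deriv
      (by simp only [id]; ring)
  have hball₀ := Metric.ball_mem_nhds z₀ (half_pos hε)
  refine (hasDerivAt_integral_of_dominated_loc_of_deriv_le hball₀
    (Filter.Eventually.of_forall fun z => by simpa using hmeas 1 z) ?_ (hmeas 2 z₀) (hbound 2)
    (hF.norm.div_const _) hderiv).2.differentiableAt.differentiableWithinAt
  refine (hF.norm.div_const (ε / 2)).mono' (by simpa using hmeas 1 z₀) ?_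
  filter_upwards [hbound 1] with p hp
  simpa using hp z₀ (Metric.mem_ball_self (half_pos hε))

theorem hasSum_integral_geometric {α : Type*} [MeasurableSpace α] {μ : Measure α}
    {q F : α → ℂ} {r : ℝ} (hr₀ : 0 ≤ r) (hr : r < 1) (hq : AEStronglyMeasurable q μ)
    (hqr : ∀ᵐ p ∂μ, ‖q p‖ ≤ r) (hF : Integrable F μ) :
    HasSum (fun k : ℕ => ∫ p, q p ^ k * F p ∂μ) (∫ p, (1 - q p)⁻¹ * F p ∂μ) := by
  refine hasSum_integral_of_dominated_convergence (fun k p => r ^ k * ‖F p‖)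
    (fun k => (hq.pow k).mul hF.1) (fun k => ?_)
    (Filter.Eventually.of_forall fun p => (summable_geometric_of_lt_one hr₀ hr).mul_right _)
    ?_ ?_
  · filter_upwards [hqr] with p hp
    rw [norm_mul, norm_pow]
    gcongr
  · simp_rw [tsum_mul_right, tsum_geometric_of_lt_one hr₀ hr]
    exact hF.norm.const_mul _
  · filter_upwards [hqr] with p hp
    exact (hasSum_geometric_of_norm_lt_one (hp.trans_lt hr)).mul_right (F p)

theorem norm_div_mul_exp_ofReal_le {a z : ℂ} {p : ℝ} (hp : 0 ≤ p) :
    ‖z / (a * Complex.exp p)‖ ≤ ‖z‖ / ‖a‖ := by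
  rw [norm_div, norm_mul, Complex.norm_exp_ofReal, ← div_div]
  exact div_le_self (by positivity) (Real.one_le_exp hp)

theorem hasSum_laplace_coeff_mul_pow {F : ℝ → ℂ} (hF : IntegrableOn F (Ioi 0)) {a z : ℂ}
    (hz : ‖z‖ < ‖a‖) :
    HasSum (fun k : ℕ => (a ^ (-(k + 1 : ℤ)) *
        ∫ p in Ioi (0 : ℝ), Complex.exp (-((k : ℂ) + 1) * p) * F p) * z ^ (k + 1))
      (z * ∫ p in Ioi (0 : ℝ), F p / (a * Complex.exp p - z)) := by
  have ha : a ≠ 0 := norm_pos_iff.mp ((norm_nonneg z).trans_lt hz)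
  set q : ℝ → ℂ := fun p => z / (a * Complex.exp p)
  have hq : Continuous q := by
    fun_prop (disch := exact fun p => mul_ne_zero ha (Complex.exp_ne_zero _))
  have hr : ‖z‖ / ‖a‖ < 1 := (div_lt_one (norm_pos_iff.mpr ha)).mpr hz
  have hqr : ∀ᵐ p ∂volume.restrict (Ioi (0 : ℝ)), ‖q p‖ ≤ ‖z‖ / ‖a‖ := by
    filter_upwards [ae_restrict_mem measurableSet_Ioi] with p hp
    exact norm_div_mul_exp_ofReal_le (le_of_lt hp)
  have hterm (k : ℕ) (p : ℝ) : q p ^ k * (q p * F p) =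
      (a ^ (-(k + 1 : ℤ)) * z ^ (k + 1)) * (Complex.exp (-((k : ℂ) + 1) * p) * F p) := by
    have hexp : Complex.exp (-((k : ℂ) + 1) * p) = (Complex.exp p ^ (k + 1))⁻¹ := by
      rw [← Complex.exp_nat_mul, ← Complex.exp_neg]
      push_cast
      ring_nf
    have hpow : a ^ (-(k + 1 : ℤ)) = (a ^ (k + 1))⁻¹ := by
      rw [zpow_neg]
      norm_cast
    rw [hexp, hpow]
    ring
  have hlim : ∀ p ∈ Ioi (0 : ℝ),
      (1 - q p)⁻¹ * (q p * F p) = z * (F p / (a * Complex.exp p - z)) := by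
    intro p hp
    have h₁ : a * Complex.exp p ≠ 0 := mul_ne_zero ha (Complex.exp_ne_zero _)
    have h₂ : a * Complex.exp p - z ≠ 0 := by
      rintro h
      have hq₁ := (norm_div_mul_exp_ofReal_le (z := z) (le_of_lt hp)).trans_lt hr
      rw [← sub_eq_zero.mp h, div_self h₁, norm_one] at hq₁
      exact lt_irrefl _ hq₁
    simp only [q]
    field_simp
  have h := hasSum_integral_geometric (by positivity) hr hq.aestronglyMeasurable hqr
    (hF.bdd_mul hq.aestronglyMeasurable hqr)
  simp_rw [hterm, integral_const_mul] at h
  rw [setIntegral_congr_fun measurableSet_Ioi hlim, integral_const_mul] at h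
  convert h using 2 with k
  ring

theorem stmt16_general (F : ℝ → ℂ)
    (hFint : IntegrableOn F (Ioi 0))
    (a : ℂ) :
    ∃ g : ℂ → ℂ,
      DifferentiableOn ℂ g {z : ℂ | ¬ ∃ t : ℝ, 1 ≤ t ∧ z = (t : ℂ) * a} ∧
      ∀ z : ℂ, ‖z‖ < ‖a‖ →
        g z = ∑' k : ℕ,
          (a ^ (-(k + 1 : ℤ)) * ∫ p in Ioi (0 : ℝ), Complex.exp (-((k : ℂ) + 1) * p) * F p) *
            z ^ (k + 1) := by
  refine ⟨fun z => z * ∫ p in Ioi (0 : ℝ), F p / (a * Complex.exp p - z), ?_,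
    fun z hz => (hasSum_laplace_coeff_mul_pow hFint hz).tsum_eq.symm⟩
  have hray : ∀ᵐ p : ℝ ∂volume.restrict (Ioi 0),
      a * Complex.exp p ∈ {z : ℂ | ∃ t : ℝ, 1 ≤ t ∧ z = t * a} := by
    filter_upwards [ae_restrict_mem measurableSet_Ioi] with p hp
    exact ⟨Real.exp p, Real.one_le_exp hp.le, by rw [Complex.ofReal_exp, mul_comm]⟩
  have hφ : Continuous fun p : ℝ => a * Complex.exp p := by fun_prop
  exact differentiableOn_id.mul
    (differentiableOn_integral_div_sub (isClosed_ray a) hray hφ.aestronglyMeasurable hFint)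

/-- With `f_k = a^{-k} ∫_0^∞ e^{-kp} F(p) dp` (`F` bounded, continuous, integrable on
`(0,∞)`), the sum `f(z) = Σ_{k≥1} f_k z^k`, convergent for `|z| < |a|`, extends analytically
to `ℂ ∖ {a·t : t ≥ 1}`. -/
theorem stmt16 (F : ℝ → ℂ) (hFc : ContinuousOn F (Ioi 0))
    (hFbd : ∃ C : ℝ, ∀ p ∈ Ioi (0 : ℝ), ‖F p‖ ≤ C)
    (hFint : IntegrableOn F (Ioi 0))
    (a : ℂ) (ha : a ≠ 0) :
    ∃ g : ℂ → ℂ,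
      DifferentiableOn ℂ g {z : ℂ | ¬ ∃ t : ℝ, 1 ≤ t ∧ z = (t : ℂ) * a} ∧
      ∀ z : ℂ, ‖z‖ < ‖a‖ →
        g z = ∑' k : ℕ,
          (a ^ (-(k + 1 : ℤ)) * ∫ p in Ioi (0 : ℝ), Complex.exp (-((k : ℂ) + 1) * p) * F p) *
            z ^ (k + 1) :=
  stmt16_general F hFint a
end

section
/- For a > 1/2, the series Σ_{k=1}^∞ e^{i√k} k^{-a} converges. -/
/-!
Put `f x = exp (i √x) x^(-a)`. Its derivative is `O(x^(-a-1/2))`, summable over the integers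
because `a > 1/2`, so by the mean value theorem `f k` differs from `∫_k^(k+1) f` by a summable
error, and the partial sums converge as soon as `∫_1^T f` does. That integral converges after
integrating by parts against `-2i exp (i √x)`, an antiderivative of `exp (i √x) / √x`: the
boundary term is `O(x^(1/2-a)) → 0` and the new integrand is `O(x^(-a-1/2))`, integrable on
`(1, ∞)`.
-/

open Filter MeasureTheory Set Topology intervalIntegral Complex

section SumVsIntegral

variable {E : Type*} [NormedAddCommGroup E] [NormedSpace ℝ E] [CompleteSpace E]
  {f f' : ℝ → E}

theorem norm_sub_integral_le_of_norm_deriv_le {c C : ℝ}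
    (hf : ∀ x ∈ Icc c (c + 1), HasDerivAt f (f' x) x)
    (hf' : ∀ x ∈ Icc c (c + 1), ‖f' x‖ ≤ C) :
    ‖f c - ∫ x in c..c + 1, f x‖ ≤ C := by
  have hcc : c ≤ c + 1 := by linarith
  have hC : 0 ≤ C := (norm_nonneg _).trans (hf' c (left_mem_Icc.2 hcc))
  have hmvt : ∀ x ∈ Icc c (c + 1), ‖f x - f c‖ ≤ C * (x - c) :=
    norm_image_sub_le_of_norm_deriv_le_segment' (fun x hx => (hf x hx).hasDerivWithinAt)
      (fun x hx => hf' x (Ico_subset_Icc_self hx))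
  have hint : IntervalIntegrable f volume c (c + 1) :=
    (HasDerivAt.continuousOn (fun x hx => hf x (uIcc_of_le hcc ▸ hx))).intervalIntegrable
  calc ‖f c - ∫ x in c..c + 1, f x‖ = ‖∫ x in c..c + 1, (f c - f x)‖ := by
        rw [integral_sub intervalIntegrable_const hint, intervalIntegral.integral_const]
        simp
    _ ≤ C * |c + 1 - c| := by
        refine norm_integral_le_of_norm_le_const fun x hx => ?_
        rw [uIoc_of_le hcc] at hx
        rw [norm_sub_rev]
        exact (hmvt x (Ioc_subset_Icc_self hx)).trans
          (mul_le_of_le_one_right hC (by linarith [hx.2]))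
    _ = C := by simp

theorem exists_tendsto_sum_of_tendsto_integral {φ : ℝ → ℝ} {J : E}
    (hf : ∀ x, 1 ≤ x → HasDerivAt f (f' x) x) (hf' : ∀ x, 1 ≤ x → ‖f' x‖ ≤ φ x)
    (hφ : AntitoneOn φ (Ici 1)) (hφs : Summable fun k : ℕ => φ (k + 1))
    (hJ : Tendsto (fun T => ∫ x in (1 : ℝ)..T, f x) atTop (𝓝 J)) :
    ∃ L, Tendsto (fun N : ℕ => ∑ k ∈ Finset.range N, f (k + 1)) atTop (𝓝 L) := by
  set d : ℕ → E := fun k => f (k + 1) - ∫ x in (k + 1 : ℝ)..k + 1 + 1, f x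
  have hd : ∀ k : ℕ, ‖d k‖ ≤ φ (k + 1) := by
    intro k
    have hk : (1 : ℝ) ≤ k + 1 := by simp
    refine norm_sub_integral_le_of_norm_deriv_le (fun x hx => hf x (hk.trans hx.1)) fun x hx => ?_
    exact (hf' x (hk.trans hx.1)).trans (hφ hk (hk.trans hx.1) hx.1)
  have hsum : ∀ N : ℕ, ∑ k ∈ Finset.range N, f (k + 1)
      = ∑ k ∈ Finset.range N, d k + ∫ x in (1 : ℝ)..N + 1, f x := by
    intro N
    have hadj := sum_integral_adjacent_intervals (μ := volume) (f := f)
      (a := fun k : ℕ => (k + 1 : ℝ)) (n := N) fun k _ =>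
        (HasDerivAt.continuousOn fun x hx => hf x <| (le_min (by simp)
          (le_add_of_nonneg_left k.succ.cast_nonneg)).trans hx.1).intervalIntegrable
    push_cast at hadj
    simp only [d, Finset.sum_sub_distrib, hadj, zero_add, sub_add_cancel]
  exact ⟨_, ((Summable.of_norm_bounded hφs hd).hasSum.tendsto_sum_nat.add
    (hJ.comp (tendsto_atTop_add_const_right _ 1 tendsto_natCast_atTop_atTop))).congr
      fun N => (hsum N).symm⟩

end SumVsIntegral

theorem exists_tendsto_integral_mul_deriv {A : Type*} [NormedRing A] [NormedAlgebra ℝ A]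
    [CompleteSpace A] {u u' v v' : ℝ → A} {t₀ : ℝ} {l : A}
    (hu : ∀ x, t₀ ≤ x → HasDerivAt u (u' x) x)
    (hv : ∀ x, t₀ ≤ x → HasDerivAt v (v' x) x)
    (hu' : ContinuousOn u' (Ici t₀)) (hv' : ContinuousOn v' (Ici t₀))
    (huv : Tendsto (fun x => u x * v x) atTop (𝓝 l))
    (hu'v : IntegrableOn (fun x => u' x * v x) (Ioi t₀)) :
    ∃ J, Tendsto (fun T => ∫ x in t₀..T, u x * v' x) atTop (𝓝 J) := by
  refine ⟨l - u t₀ * v t₀ - ∫ x in Ioi t₀, u' x * v x, ((huv.sub_const _).sub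
    (intervalIntegral_tendsto_integral_Ioi t₀ hu'v tendsto_id)).congr' ?_⟩
  filter_upwards [eventually_ge_atTop t₀] with T hT
  have hsub : uIcc t₀ T ⊆ Ici t₀ := by
    rw [uIcc_of_le hT]; exact Icc_subset_Ici_self
  exact (integral_mul_deriv_eq_deriv_mul (fun x hx => hu x (hsub hx)) (fun x hx => hv x (hsub hx))
    ((hu'.mono hsub).intervalIntegrable) ((hv'.mono hsub).intervalIntegrable)).symm

theorem hasDerivAt_cexp_I_mul_sqrt {x : ℝ} (hx : 0 < x) :
    HasDerivAt (fun y : ℝ => cexp (I * √y)) (cexp (I * √x) * (I / (2 * √x))) x := by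
  have := ((Real.hasDerivAt_sqrt hx.ne').ofReal_comp.const_mul I).cexp
  convert this using 2
  push_cast
  ring

theorem hasDerivAt_ofReal_rpow_const {x : ℝ} (p : ℝ) (hx : 0 < x) :
    HasDerivAt (fun y : ℝ => ((y ^ p : ℝ) : ℂ)) ((p * x ^ (p - 1) : ℝ) : ℂ) x :=
  (Real.hasDerivAt_rpow_const (Or.inl hx.ne')).ofReal_comp

theorem continuousOn_ofReal_rpow_const (p : ℝ) :
    ContinuousOn (fun x : ℝ => ((x ^ p : ℝ) : ℂ)) (Ioi 0) :=
  continuous_ofReal.comp_continuousOn <|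
    continuousOn_id.rpow_const fun _ hx => Or.inl (ne_of_gt hx)

theorem norm_ofReal_mul_neg_two_I_mul_cexp (r t : ℝ) :
    ‖(r : ℂ) * (-2 * I * cexp (I * t))‖ = 2 * |r| := by
  rw [norm_mul, norm_mul, norm_exp_I_mul_ofReal, norm_real]
  simp [mul_comm]

theorem hasDerivAt_neg_two_I_mul_cexp_I_mul_sqrt {x : ℝ} (hx : 0 < x) :
    HasDerivAt (fun y : ℝ => -2 * I * cexp (I * √y)) (cexp (I * √x) / √x) x := by
  refine ((hasDerivAt_cexp_I_mul_sqrt hx).const_mul (-2 * I)).congr_deriv ?_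
  have : (√x : ℂ) ≠ 0 := ofReal_ne_zero.2 (Real.sqrt_pos.2 hx).ne'
  field_simp
  linear_combination -I_sq

theorem exists_tendsto_integral_cexp_I_mul_sqrt_mul_rpow {a : ℝ} (ha : 1 / 2 < a) :
    ∃ J, Tendsto (fun T => ∫ x in (1 : ℝ)..T, cexp (I * √x) * ((x ^ (-a) : ℝ) : ℂ))
      atTop (𝓝 J) := by
  have hintegrand : ∀ x : ℝ, 0 < x → ((x ^ (1 / 2 - a) : ℝ) : ℂ) * (cexp (I * √x) / √x)
      = cexp (I * √x) * ((x ^ (-a) : ℝ) : ℂ) := by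
    intro x hx
    have hpow : x ^ (1 / 2 - a) = √x * x ^ (-a) := by
      rw [Real.sqrt_eq_rpow, ← Real.rpow_add hx]; ring_nf
    have : (√x : ℂ) ≠ 0 := ofReal_ne_zero.2 (Real.sqrt_pos.2 hx).ne'
    rw [hpow]
    push_cast
    field_simp
  have hu' : ContinuousOn (fun x : ℝ => (((1 / 2 - a) * x ^ (1 / 2 - a - 1) : ℝ) : ℂ))
      (Ioi 0) := by
    simp only [ofReal_mul]
    exact continuousOn_const.mul (continuousOn_ofReal_rpow_const _)
  have hdecay : Tendsto (fun x : ℝ => ((x ^ (1 / 2 - a) : ℝ) : ℂ) * (-2 * I * cexp (I * √x)))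
      atTop (𝓝 0) := by
    have h := (tendsto_rpow_neg_atTop (by linarith : 0 < a - 1 / 2)).const_mul 2
    rw [mul_zero] at h
    rw [tendsto_zero_iff_norm_tendsto_zero]
    refine h.congr' ?_
    filter_upwards [eventually_gt_atTop 0] with x hx
    rw [norm_ofReal_mul_neg_two_I_mul_cexp, abs_of_pos (Real.rpow_pos_of_pos hx _), neg_sub]
  have hint : IntegrableOn (fun x : ℝ => (((1 / 2 - a) * x ^ (1 / 2 - a - 1)) : ℝ)
      * (-2 * I * cexp (I * √x))) (Ioi 1) := by
    refine Integrable.mono' ((integrableOn_Ioi_rpow_of_lt (a := 1 / 2 - a - 1) (by linarith)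
      one_pos).const_mul (2 * |1 / 2 - a|)) ?_ ?_
    · exact ((hu'.mono (Ioi_subset_Ioi zero_le_one)).mul (by fun_prop)).aestronglyMeasurable
        measurableSet_Ioi
    · filter_upwards [ae_restrict_mem measurableSet_Ioi] with x hx
      rw [norm_ofReal_mul_neg_two_I_mul_cexp, abs_mul,
        abs_of_pos (Real.rpow_pos_of_pos (zero_lt_one.trans hx) _), mul_assoc]
  obtain ⟨J, hJ⟩ := exists_tendsto_integral_mul_deriv
    (fun x hx => hasDerivAt_ofReal_rpow_const _ (zero_lt_one.trans_le hx))
    (fun x hx => hasDerivAt_neg_two_I_mul_cexp_I_mul_sqrt (zero_lt_one.trans_le hx))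
    (hu'.mono fun _ hx => mem_Ioi.2 (zero_lt_one.trans_le hx))
    (ContinuousOn.div (by fun_prop) (by fun_prop) fun x hx =>
      ofReal_ne_zero.2 (Real.sqrt_pos.2 (zero_lt_one.trans_le hx)).ne')
    hdecay hint
  refine ⟨J, hJ.congr' ?_⟩
  filter_upwards [eventually_ge_atTop 1] with T hT
  refine integral_congr fun x hx => hintegrand x ?_
  rw [uIcc_of_le hT] at hx
  exact zero_lt_one.trans_le hx.1

theorem hasDerivAt_cexp_I_mul_sqrt_mul_rpow (a : ℝ) {x : ℝ} (hx : 0 < x) :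
    HasDerivAt (fun y : ℝ => cexp (I * √y) * ((y ^ (-a) : ℝ) : ℂ))
      (cexp (I * √x) * (I * ((x ^ (-a - 1 / 2) / 2 : ℝ) : ℂ) - ((a * x ^ (-a - 1) : ℝ) : ℂ)))
      x := by
  refine ((hasDerivAt_cexp_I_mul_sqrt hx).mul
    (hasDerivAt_ofReal_rpow_const (-a) hx)).congr_deriv ?_
  have hsqrt : (√x : ℂ) ≠ 0 := ofReal_ne_zero.2 (Real.sqrt_pos.2 hx).ne'
  have hpow : x ^ (-a - 1 / 2) = x ^ (-a) / √x := by
    rw [Real.sqrt_eq_rpow, Real.rpow_sub hx]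
  rw [hpow]
  push_cast
  field_simp
  ring

theorem norm_deriv_cexp_I_mul_sqrt_mul_rpow_le (a : ℝ) {x : ℝ} (hx : 1 ≤ x) :
    ‖cexp (I * √x) * (I * ((x ^ (-a - 1 / 2) / 2 : ℝ) : ℂ) - ((a * x ^ (-a - 1) : ℝ) : ℂ))‖
      ≤ (1 / 2 + |a|) * x ^ (-a - 1 / 2) := by
  have hx₀ : 0 < x := zero_lt_one.trans_le hx
  calc _ = ‖I * ((x ^ (-a - 1 / 2) / 2 : ℝ) : ℂ) - ((a * x ^ (-a - 1) : ℝ) : ℂ)‖ := by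
        rw [norm_mul, norm_exp_I_mul_ofReal, one_mul]
    _ ≤ ‖I * ((x ^ (-a - 1 / 2) / 2 : ℝ) : ℂ)‖ + ‖((a * x ^ (-a - 1) : ℝ) : ℂ)‖ :=
        norm_sub_le _ _
    _ = x ^ (-a - 1 / 2) / 2 + |a| * x ^ (-a - 1) := by
        rw [norm_mul, norm_I, one_mul, norm_real, norm_real, Real.norm_eq_abs, Real.norm_eq_abs,
          abs_mul, abs_of_pos (by positivity : 0 < x ^ (-a - 1 / 2) / 2),
          abs_of_pos (Real.rpow_pos_of_pos hx₀ _)]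
    _ ≤ x ^ (-a - 1 / 2) / 2 + |a| * x ^ (-a - 1 / 2) := by
        gcongr _ + |a| * ?_
        exact Real.rpow_le_rpow_of_exponent_le hx (by linarith)
    _ = (1 / 2 + |a|) * x ^ (-a - 1 / 2) := by ring

/-- For `a > 1/2`, the series `Σ_{k=1}^∞ e^{i√k} k^{-a}` converges (its partial sums have a
limit). -/
theorem stmt19 (a : ℝ) (ha : 1 / 2 < a) :
    ∃ L : ℂ, Tendsto
      (fun N : ℕ => ∑ k ∈ Finset.range N,
        Complex.exp (Complex.I * Real.sqrt (k + 1)) / (((k + 1 : ℝ) ^ a : ℝ) : ℂ))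
      atTop (nhds L) := by
  have hφ : AntitoneOn (fun x : ℝ => (1 / 2 + |a|) * x ^ (-a - 1 / 2)) (Ici 1) :=
    fun x hx y _ hxy => mul_le_mul_of_nonneg_left
      (Real.rpow_le_rpow_of_nonpos (zero_lt_one.trans_le hx) hxy (by linarith)) (by positivity)
  have hφs : Summable fun k : ℕ => (1 / 2 + |a|) * ((k : ℝ) + 1) ^ (-a - 1 / 2) := by
    have := (summable_nat_add_iff 1).2 (Real.summable_nat_rpow.2 (by linarith : -a - 1 / 2 < -1))
    exact_mod_cast this.mul_left (1 / 2 + |a|)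
  obtain ⟨J, hJ⟩ := exists_tendsto_integral_cexp_I_mul_sqrt_mul_rpow ha
  obtain ⟨L, hL⟩ := exists_tendsto_sum_of_tendsto_integral
    (fun x hx => hasDerivAt_cexp_I_mul_sqrt_mul_rpow a (zero_lt_one.trans_le hx))
    (fun x hx => norm_deriv_cexp_I_mul_sqrt_mul_rpow_le a hx) hφ hφs hJ
  refine ⟨L, hL.congr fun N => Finset.sum_congr rfl fun k _ => ?_⟩
  rw [Real.rpow_neg (by positivity), ofReal_inv, div_eq_mul_inv]
end
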